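/- arXiv:1405.0027 — 5 statements merged into one kernel-verified Lean document; each statement's English description precedes it below -/
import Mathlib

section
/- (Jensen-type determinant formula for AR spectra) If X is a symmetric positive semidefinite m(n+1)×m(n+1) real matrix with top-left m×m block X_{00} positive definite, and X = A^T A with A = [A_0, ..., A_n] ∈ ℝ^{m × m(n+1)} such that the matrix polynomial A(z) = Σ_j A_j z^j has no zeros of det in the closed unit disk, then (1/2π) ∫_{-π}^{π} log det( Δ(e^{iθ}) X Δ(e^{iθ})* ) dθ = log det(A_0^T A_0) = log det X_{00}. -/
open Matrix Finset
open scoped ComplexOrder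

/-- The shift operator Δ(e^{iθ}) = [I_m, e^{iθ}I_m, ..., e^{inθ}I_m]. -/
noncomputable def Delta (m n : ℕ) (θ : ℝ) : Matrix (Fin m) (Fin (n+1) × Fin m) ℂ :=
  fun i p => Complex.exp (Complex.I * (p.1 : ℕ) * θ) * (if i = p.2 then 1 else 0)

/-- D_0(X) = Σ_h X_{hh} (sum of diagonal blocks). -/
def Dop0 {m n : ℕ} (X : Matrix (Fin (n+1) × Fin m) (Fin (n+1) × Fin m) ℝ) :
    Matrix (Fin m) (Fin m) ℝ :=
  fun a b => ∑ h : Fin (n+1), X (h, a) (h, b)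

/-- D_j(X) = 2 Σ_h X_{h, h+j}, for j ≥ 1. -/
def DopJ {m n : ℕ} (X : Matrix (Fin (n+1) × Fin m) (Fin (n+1) × Fin m) ℝ) (j : ℕ) :
    Matrix (Fin m) (Fin m) ℝ :=
  fun a b => 2 * ∑ h : Fin (n+1), ∑ k : Fin (n+1),
    if (k : ℕ) = (h : ℕ) + j then X (h, a) (k, b) else 0

/-- Symmetric block Toeplitz matrix with first block row Y. -/
def Tobl {m n : ℕ} (Y : Fin (n+1) → Matrix (Fin m) (Fin m) ℝ) :
    Matrix (Fin (n+1) × Fin m) (Fin (n+1) × Fin m) ℝ :=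
  fun p q =>
    if (p.1 : ℕ) ≤ (q.1 : ℕ) then
      Y ⟨(q.1 : ℕ) - (p.1 : ℕ), lt_of_le_of_lt (Nat.sub_le _ _) q.1.isLt⟩ p.2 q.2
    else
      Y ⟨(p.1 : ℕ) - (q.1 : ℕ), lt_of_le_of_lt (Nat.sub_le _ _) p.1.isLt⟩ q.2 p.2

/-- Singular values of a square complex matrix (unsorted): square roots of
the eigenvalues of AᴴA. -/
noncomputable def singularValues {m : ℕ} (A : Matrix (Fin m) (Fin m) ℂ) : Fin m → ℝ :=
  fun i => Real.sqrt ((Matrix.posSemidef_conjTranspose_mul_self A).1.eigenvalues i)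

/-- The k-th largest singular value (k = 0 gives the largest). -/
noncomputable def sdesc {m : ℕ} (A : Matrix (Fin m) (Fin m) ℂ) : Fin m → ℝ :=
  fun i => (singularValues A ∘ Tuple.sort (singularValues A)) i.rev

/-- Largest singular value (operator norm). -/
noncomputable def opNorm {m : ℕ} (A : Matrix (Fin m) (Fin m) ℂ) : ℝ :=
  ⨆ i, singularValues A i

/-! Writing `B(θ) = A Δ(θ)ᴴ = Σ_j A_j e^{-ijθ}`, the spectral density factors as
`Δ X Δᴴ = B(θ)ᴴ B(θ)`, so its log-determinant is `2 log |det A(e^{-iθ})|`. Since `z ↦ det A(z)` is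
entire and has no zeros on the closed unit disk, `log |det A|` is harmonic there, and its mean over
the unit circle is its value `log |det A_0|` at the centre (Jensen's formula without zeros). -/

theorem differentiable_det_sum_pow_smul {ι : Type*} [Fintype ι] [DecidableEq ι] {N : ℕ}
    (M : Fin N → Matrix ι ι ℂ) :
    Differentiable ℂ fun z : ℂ => (∑ j : Fin N, z ^ (j : ℕ) • M j).det := by
  simp only [Matrix.det_apply, Matrix.sum_apply, Matrix.smul_apply, smul_eq_mul]
  fun_prop

open Real in
theorem circleAverage_log_norm_det_sum_pow_smul {ι : Type*} [Fintype ι] [DecidableEq ι] {n : ℕ}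
    (M : Fin (n + 1) → Matrix ι ι ℂ)
    (hM : ∀ z : ℂ, ‖z‖ ≤ 1 → (∑ j : Fin (n + 1), z ^ (j : ℕ) • M j).det ≠ 0) :
    circleAverage (fun z => log ‖(∑ j : Fin (n + 1), z ^ (j : ℕ) • M j).det‖) 0 1
      = log ‖(M 0).det‖ := by
  have h := AnalyticOnNhd.circleAverage_log_norm_of_ne_zero (R := 1) (c := 0)
    (fun z _ => (differentiable_det_sum_pow_smul M).analyticAt z)
    (fun z hz => hM z (by simpa using hz))
  rw [h, Fin.sum_univ_succ]
  simp

open Real in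
theorem circleAverage_eq_integral_neg_pi_pi {E : Type*} [NormedAddCommGroup E] [NormedSpace ℝ E]
    (f : ℂ → E) (c : ℂ) (R : ℝ) :
    circleAverage f c R = (2 * π)⁻¹ • ∫ θ in -π..π, f (circleMap c R (-θ)) := by
  rw [circleAverage_eq_integral_add (-π),
    intervalIntegral.integral_comp_add_right (fun θ => f (circleMap c R θ)),
    intervalIntegral.integral_comp_neg (fun θ => f (circleMap c R θ))]
  congr 2 <;> ring

theorem mul_map_transpose_mul_mul_conjTranspose {ι κ μ : Type*} [Fintype ι] [Fintype κ]
    (D : Matrix μ ι ℂ) (A : Matrix κ ι ℝ) :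
    D * (Aᵀ * A).map Complex.ofReal * Dᴴ
      = (A.map Complex.ofReal * Dᴴ)ᴴ * (A.map Complex.ofReal * Dᴴ) := by
  have hA : (Aᵀ * A).map Complex.ofReal = (A.map Complex.ofReal)ᴴ * A.map Complex.ofReal := by
    ext i j
    simp [Matrix.mul_apply]
  rw [hA, Matrix.conjTranspose_mul, Matrix.conjTranspose_conjTranspose]
  simp only [Matrix.mul_assoc]

theorem re_det_conjTranspose_mul_self {ι : Type*} [Fintype ι] [DecidableEq ι] (B : Matrix ι ι ℂ) :
    (Bᴴ * B).det.re = ‖B.det‖ ^ 2 := by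
  rw [Matrix.det_mul, Matrix.det_conjTranspose, Complex.star_def, mul_comm, Complex.mul_conj,
    Complex.ofReal_re, Complex.sq_norm]

theorem map_ofReal_mul_conjTranspose_Delta {m n : ℕ} (A : Matrix (Fin m) (Fin (n+1) × Fin m) ℝ)
    (θ : ℝ) :
    A.map Complex.ofReal * (Delta m n θ)ᴴ
      = ∑ j : Fin (n+1), circleMap 0 1 (-θ) ^ (j : ℕ)
          • (Matrix.of fun a b : Fin m => A a (j, b)).map Complex.ofReal := by
  ext a b
  simp only [Matrix.mul_apply, Matrix.conjTranspose_apply, Matrix.map_apply, Matrix.sum_apply,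
    Matrix.smul_apply, smul_eq_mul, Delta, Fintype.sum_prod_type, circleMap, zero_add,
    star_mul', Matrix.of_apply]
  refine Finset.sum_congr rfl fun j _ => ?_
  rw [Finset.sum_eq_single b (fun c _ hc => by simp [Ne.symm hc]) (by simp)]
  simp only [if_pos, mul_one, star_one, RCLike.star_def, ← Complex.exp_conj, map_mul,
    Complex.conj_I, map_natCast, Complex.conj_ofReal, Complex.ofReal_one, Complex.ofReal_neg,
    one_mul, ← Complex.exp_nat_mul]
  rw [mul_comm]
  ring_nf

theorem of_transpose_mul_self_diag_block {m n : ℕ} (A : Matrix (Fin m) (Fin (n+1) × Fin m) ℝ)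
    (i : Fin (n+1)) :
    (Matrix.of fun a b : Fin m => (Aᵀ * A) (i, a) (i, b))
      = (Matrix.of fun a b : Fin m => A a (i, b))ᵀ * (Matrix.of fun a b : Fin m => A a (i, b)) := by
  ext a b
  simp [Matrix.mul_apply]

theorem stmt_8_general (m n : ℕ)
    (X : Matrix (Fin (n+1) × Fin m) (Fin (n+1) × Fin m) ℝ)
    (A : Matrix (Fin m) (Fin (n+1) × Fin m) ℝ)
    (hXA : X = Aᵀ * A)
    (hdet : ∀ z : ℂ, ‖z‖ ≤ 1 →
      (∑ j : Fin (n+1), z ^ (j : ℕ) • ((Matrix.of fun a b : Fin m => A a (j, b)).map Complex.ofReal)).det ≠ 0) :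
    (2 * Real.pi)⁻¹
        * ∫ θ in (-Real.pi)..Real.pi,
            Real.log (Delta m n θ * X.map Complex.ofReal * (Delta m n θ)ᴴ).det.re
      = Real.log ((Matrix.of fun a b : Fin m => A a (0, b))ᵀ
            * (Matrix.of fun a b : Fin m => A a (0, b))).det
    ∧ Real.log ((Matrix.of fun a b : Fin m => A a (0, b))ᵀ
            * (Matrix.of fun a b : Fin m => A a (0, b))).det
      = Real.log (Matrix.of fun a b : Fin m => X (0, a) (0, b)).det := by
  subst hXA
  set A₀ := Matrix.of fun a b : Fin m => A a (0, b)
  set M : Fin (n+1) → Matrix (Fin m) (Fin m) ℂ :=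
    fun j => (Matrix.of fun a b : Fin m => A a (j, b)).map Complex.ofReal
  have hintegrand (θ : ℝ) :
      Real.log (Delta m n θ * (Aᵀ * A).map Complex.ofReal * (Delta m n θ)ᴴ).det.re
        = 2 * Real.log ‖(∑ j : Fin (n+1), circleMap 0 1 (-θ) ^ (j : ℕ) • M j).det‖ := by
    rw [mul_map_transpose_mul_mul_conjTranspose, re_det_conjTranspose_mul_self,
      map_ofReal_mul_conjTranspose_Delta, Real.log_pow, Nat.cast_ofNat]
  have hjensen := circleAverage_log_norm_det_sum_pow_smul M hdet
  rw [circleAverage_eq_integral_neg_pi_pi, smul_eq_mul] at hjensen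
  have hM₀ : (M 0).det = A₀.det := (Complex.ofRealHom.map_det A₀).symm
  have hA₀ : Real.log (A₀ᵀ * A₀).det = 2 * Real.log ‖(M 0).det‖ := by
    rw [det_mul, det_transpose, ← sq, Real.log_pow, hM₀, Complex.norm_real,
      Real.norm_eq_abs, Real.log_abs, Nat.cast_ofNat]
  refine ⟨?_, by rw [of_transpose_mul_self_diag_block]⟩
  simp_rw [hintegrand, intervalIntegral.integral_const_mul, hA₀]
  linear_combination 2 * hjensen

/-- Jensen-type determinant formula: if `X = AᵀA ⪰ 0` with
`X_{00} ≻ 0` and the matrix polynomial `A(z) = Σ_j A_j z^j` has `det A(z) ≠ 0`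
on the closed unit disk, then
`(1/2π) ∫ log det(Δ X Δ*) dθ = log det(A_0ᵀ A_0) = log det X_{00}`. -/
theorem stmt_8 (m n : ℕ)
    (X : Matrix (Fin (n+1) × Fin m) (Fin (n+1) × Fin m) ℝ)
    (A : Matrix (Fin m) (Fin (n+1) × Fin m) ℝ)
    (hXA : X = Aᵀ * A)
    (hX00 : (Matrix.of fun a b : Fin m => X (0, a) (0, b)).PosDef)
    (hdet : ∀ z : ℂ, ‖z‖ ≤ 1 →
      (∑ j : Fin (n+1), z ^ (j : ℕ) • ((Matrix.of fun a b : Fin m => A a (j, b)).map Complex.ofReal)).det ≠ 0) :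
    (2 * Real.pi)⁻¹
        * ∫ θ in (-Real.pi)..Real.pi,
            Real.log (Delta m n θ * X.map Complex.ofReal * (Delta m n θ)ᴴ).det.re
      = Real.log ((Matrix.of fun a b : Fin m => A a (0, b))ᵀ
            * (Matrix.of fun a b : Fin m => A a (0, b))).det
    ∧ Real.log ((Matrix.of fun a b : Fin m => A a (0, b))ᵀ
            * (Matrix.of fun a b : Fin m => A a (0, b))).det
      = Real.log (Matrix.of fun a b : Fin m => X (0, a) (0, b)).det :=
  stmt_8_general m n X A hXA hdet
end

section
/- Let Z = [Z_0, ..., Z_n] be a block row of real m×m matrices with Z_0 symmetric. The infimum over Y ∈ M_{m,n} of λγ·h_∞(Y) − tr(Z Y^T) is 0 if diag(Z_j) = 0 for j = 0,...,n and Σ_{j=0}^n (|(Z_j)_{kh}| + |(Z_j)_{hk}|) ≤ λγ for all k ≠ h, and is −∞ otherwise. -/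
open Matrix Finset
open scoped ComplexOrder

/-- The group-sparsity regularizer `h_∞(Y) = Σ_{k>h} max{ |(Y_0)_{hk}|,
max_j |(Y_j)_{hk}|, max_j |(Y_j)_{kh}| }`, written as a sum of sup-norms of the
vectors collecting the `(k,h)` and `(h,k)` entries of all coefficients. -/
noncomputable def hinf {m n : ℕ} (Y : Fin (n+1) → Matrix (Fin m) (Fin m) ℝ) : ℝ :=
  ∑ p : {p : Fin m × Fin m // p.2 < p.1},
    ‖(fun jb : Fin (n+1) × Bool =>
        if jb.2 then Y jb.1 p.1.1 p.1.2 else Y jb.1 p.1.2 p.1.1)‖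

/-!
The objective `Y ↦ λγ h_∞(Y) − tr(Z Yᵀ)` is positively homogeneous and the admissible `Y` form a
cone, so the infimum is `0` if the objective is nonnegative and `−∞` otherwise. Nonnegativity
says that `Z` lies in the `λγ`-ball of the dual norm of `h_∞`. The pairing `tr(Z Yᵀ)` splits
over unordered off-diagonal pairs `{k, h}`, on each of which Hölder's `ℓ¹–ℓ^∞` inequality bounds
it by `Σ_j (|(Z_j)_{kh}| + |(Z_j)_{hk}|)` times the `k h` term of `h_∞(Y)`; conversely, that
bound is attained by the sign pattern of `Z` on the pair, and a nonzero diagonal entry of `Z` is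
detected by a diagonal `Y`, on which `h_∞` vanishes.
-/

open scoped Classical in
theorem iInf_coe_eq_ite_of_posHomogeneous {E : Type*} [AddCommGroup E] [Module ℝ E]
    {P : E → Prop} (hP0 : P 0)
    (hP : ∀ t : ℝ, 0 ≤ t → ∀ y, P y → P (t • y)) {f : E → ℝ}
    (hf : ∀ t : ℝ, 0 ≤ t → ∀ y, f (t • y) = t * f y) :
    ⨅ y : {y // P y}, (f y : EReal) = if ∀ y, P y → 0 ≤ f y then 0 else ⊥ := by
  split_ifs with hnonneg
  · have hf0 : f 0 = 0 := by simpa using hf 0 le_rfl 0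
    refine le_antisymm (iInf_le_of_le ⟨0, hP0⟩ (by simp [hf0])) (le_iInf fun y => ?_)
    exact EReal.coe_nonneg.2 (hnonneg y y.2)
  · push Not at hnonneg
    obtain ⟨y, hy, hfy⟩ := hnonneg
    refine iInf_eq_bot.2 fun b hb => ?_
    obtain ⟨r, -, hr⟩ := EReal.exists_between_coe_real hb
    obtain ⟨t, ht, hft⟩ : ∃ t : ℝ, 0 ≤ t ∧ t * f y = -(|r| + 1) :=
      ⟨(|r| + 1) / -f y, div_nonneg (by positivity) (by linarith), by field_simp [hfy.ne]⟩
    refine ⟨⟨t • y, hP t ht y hy⟩, lt_trans ?_ hr⟩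
    rw [EReal.coe_lt_coe_iff, hf t ht, hft]
    linarith [neg_abs_le r]

theorem Matrix.trace_mul_transpose {ι κ R : Type*} [Fintype ι] [Fintype κ] [AddCommMonoid R]
    [Mul R] (A B : Matrix ι κ R) : (A * Bᵀ).trace = ∑ a, ∑ b, A a b * B a b := by
  simp [Matrix.trace, Matrix.mul_apply]

theorem Fintype.sum_prod_eq_sum_lt_add_swap {α M : Type*} [Fintype α] [LinearOrder α]
    [AddCommMonoid M] (g : α × α → M) (hg : ∀ a, g (a, a) = 0) :
    ∑ q, g q = ∑ p : {p : α × α // p.2 < p.1}, (g p.1 + g p.1.swap) := by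
  classical
  have hsplit : ∀ q : α × α,
      g q = (if q.2 < q.1 then g q else 0) + (if q.1 < q.2 then g q else 0) := by
    rintro ⟨a, b⟩
    rcases lt_trichotomy a b with hab | rfl | hab
    · simp [hab, hab.not_gt]
    · simp [hg]
    · simp [hab, hab.not_gt]
  have hswap : ∑ q : α × α, (if q.1 < q.2 then g q else 0)
      = ∑ q : α × α, (if q.2 < q.1 then g q.swap else 0) :=
    Fintype.sum_equiv (Equiv.prodComm α α) _ _ fun q => rfl
  rw [Fintype.sum_congr _ _ hsplit, sum_add_distrib, hswap, ← sum_add_distrib]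
  simp_rw [← ite_add_zero]
  rw [← Finset.sum_filter]
  exact Finset.sum_subtype _ (by simp) _

theorem sum_mul_le_sum_abs_mul_norm {ι : Type*} [Fintype ι] (a x : ι → ℝ) :
    ∑ i, a i * x i ≤ (∑ i, |a i|) * ‖x‖ := by
  rw [sum_mul]
  refine sum_le_sum fun i _ => ?_
  calc a i * x i ≤ |a i| * |x i| := (le_abs_self _).trans (abs_mul _ _).le
    _ ≤ |a i| * ‖x‖ := by gcongr; exact norm_le_pi_norm x i

theorem abs_sign_le_one (x : ℝ) : |(SignType.sign x : ℝ)| ≤ 1 := by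
  rcases lt_trichotomy x 0 with hx | rfl | hx <;> simp [*]

def offDiagPair {m n : ℕ} (Y : Fin (n+1) → Matrix (Fin m) (Fin m) ℝ) (k h : Fin m) :
    Fin (n+1) × Bool → ℝ :=
  fun jb => if jb.2 then Y jb.1 k h else Y jb.1 h k

section GroupSparsity

variable {m n : ℕ}

theorem hinf_eq_sum_norm_offDiagPair (Y : Fin (n+1) → Matrix (Fin m) (Fin m) ℝ) :
    hinf Y = ∑ p : {p : Fin m × Fin m // p.2 < p.1}, ‖offDiagPair Y p.1.1 p.1.2‖ :=
  rfl

theorem offDiagPair_smul (t : ℝ) (Y : Fin (n+1) → Matrix (Fin m) (Fin m) ℝ) (k h : Fin m) :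
    offDiagPair (t • Y) k h = t • offDiagPair Y k h := by
  ext ⟨j, _ | _⟩ <;> rfl

theorem hinf_smul {t : ℝ} (ht : 0 ≤ t) (Y : Fin (n+1) → Matrix (Fin m) (Fin m) ℝ) :
    hinf (t • Y) = t * hinf Y := by
  simp only [hinf_eq_sum_norm_offDiagPair, offDiagPair_smul, norm_smul, Real.norm_of_nonneg ht,
    mul_sum]

theorem sum_trace_mul_transpose_smul (Z Y : Fin (n+1) → Matrix (Fin m) (Fin m) ℝ) (t : ℝ) :
    ∑ j, (Z j * ((t • Y) j)ᵀ).trace = t * ∑ j, (Z j * (Y j)ᵀ).trace := by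
  simp [Matrix.transpose_smul, Matrix.trace_smul, mul_sum]

theorem sum_offDiagPair_mul (Z Y : Fin (n+1) → Matrix (Fin m) (Fin m) ℝ) (k h : Fin m) :
    ∑ jb, offDiagPair Z k h jb * offDiagPair Y k h jb
      = ∑ j, Z j k h * Y j k h + ∑ j, Z j h k * Y j h k := by
  simp [offDiagPair, Fintype.sum_prod_type, sum_add_distrib]

theorem sum_abs_offDiagPair (Z : Fin (n+1) → Matrix (Fin m) (Fin m) ℝ) (k h : Fin m) :
    ∑ jb, |offDiagPair Z k h jb| = ∑ j, (|Z j k h| + |Z j h k|) := by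
  simp [offDiagPair, Fintype.sum_prod_type]

theorem sum_trace_mul_transpose_le_mul_hinf {c : ℝ} {Z : Fin (n+1) → Matrix (Fin m) (Fin m) ℝ}
    (hdiag : ∀ j i, Z j i i = 0)
    (hbound : ∀ k h, k ≠ h → ∑ j, (|Z j k h| + |Z j h k|) ≤ c)
    (Y : Fin (n+1) → Matrix (Fin m) (Fin m) ℝ) :
    ∑ j, (Z j * (Y j)ᵀ).trace ≤ c * hinf Y := by
  calc ∑ j, (Z j * (Y j)ᵀ).trace
      = ∑ q : Fin m × Fin m, ∑ j, Z j q.1 q.2 * Y j q.1 q.2 := by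
        simp_rw [Matrix.trace_mul_transpose, Fintype.sum_prod_type]
        rw [sum_comm]
        exact sum_congr rfl fun a _ => sum_comm
    _ = ∑ p : {p : Fin m × Fin m // p.2 < p.1},
          ∑ jb, offDiagPair Z p.1.1 p.1.2 jb * offDiagPair Y p.1.1 p.1.2 jb := by
        rw [Fintype.sum_prod_eq_sum_lt_add_swap _ (by simp [hdiag])]
        simp [sum_offDiagPair_mul]
    _ ≤ ∑ p : {p : Fin m × Fin m // p.2 < p.1},
          (∑ jb, |offDiagPair Z p.1.1 p.1.2 jb|) * ‖offDiagPair Y p.1.1 p.1.2‖ :=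
        sum_le_sum fun p _ => sum_mul_le_sum_abs_mul_norm _ _
    _ ≤ ∑ p : {p : Fin m × Fin m // p.2 < p.1}, c * ‖offDiagPair Y p.1.1 p.1.2‖ := by
        gcongr with p
        rw [sum_abs_offDiagPair]
        exact hbound _ _ p.2.ne'
    _ = c * hinf Y := by rw [hinf_eq_sum_norm_offDiagPair, mul_sum]

theorem hinf_eq_zero_of_offDiag_eq_zero {Y : Fin (n+1) → Matrix (Fin m) (Fin m) ℝ}
    (hY : ∀ j a b, a ≠ b → Y j a b = 0) : hinf Y = 0 :=
  sum_eq_zero fun p _ => norm_eq_zero.2 <| funext fun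
    | (j, false) => hY j _ _ p.2.ne
    | (j, true) => hY j _ _ p.2.ne'

theorem hinf_eq_norm_offDiagPair {Y : Fin (n+1) → Matrix (Fin m) (Fin m) ℝ} {k h : Fin m}
    (hhk : h < k)
    (hY : ∀ j a b, a ≠ b → ¬(a = k ∧ b = h) → ¬(a = h ∧ b = k) → Y j a b = 0) :
    hinf Y = ‖offDiagPair Y k h‖ := by
  rw [hinf_eq_sum_norm_offDiagPair, sum_eq_single_of_mem ⟨(k, h), hhk⟩ (mem_univ _)]
  rintro ⟨⟨a, b⟩, hba⟩ - hne
  have hne' : ¬(a = k ∧ b = h) := fun ⟨ha, hb⟩ => hne (by subst ha hb; rfl)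
  refine norm_eq_zero.2 <| funext fun
    | (j, false) => hY j b a hba.ne ?_ ?_
    | (j, true) => hY j a b hba.ne' hne' ?_
  · rintro ⟨rfl, rfl⟩; exact hhk.not_gt hba
  · exact fun ⟨hb, ha⟩ => hne' ⟨ha, hb⟩
  · rintro ⟨rfl, rfl⟩; exact hhk.not_gt hba

theorem exists_isSymm_hinf_eq_zero_sum_trace_pos {Z : Fin (n+1) → Matrix (Fin m) (Fin m) ℝ}
    {j : Fin (n+1)} {i : Fin m} (hji : Z j i i ≠ 0) :
    ∃ Y : Fin (n+1) → Matrix (Fin m) (Fin m) ℝ,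
      (Y 0).IsSymm ∧ hinf Y = 0 ∧ 0 < ∑ j, (Z j * (Y j)ᵀ).trace := by
  classical
  refine ⟨Pi.single j (Matrix.single i i (Z j i i)), ?_, ?_, ?_⟩
  · by_cases h0 : (0 : Fin (n+1)) = j <;>
      simp [h0, Matrix.IsSymm, Matrix.transpose_single]
  · refine hinf_eq_zero_of_offDiag_eq_zero fun j' a b hab => ?_
    by_cases hj' : j' = j
    · subst hj'
      rw [Pi.single_eq_same]
      exact Matrix.single_apply_of_ne _ _ _ _ _ fun h => hab (h.1.symm.trans h.2)
    · simp [hj']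
  · rw [sum_eq_single_of_mem j (mem_univ _) fun j' _ hj' => by simp [hj'], Pi.single_eq_same,
      Matrix.transpose_single, Matrix.trace_mul_single, op_smul_eq_mul]
    exact mul_self_pos.2 hji

theorem exists_isSymm_hinf_le_one_sum_trace_eq {Z : Fin (n+1) → Matrix (Fin m) (Fin m) ℝ}
    (hZ0 : (Z 0).IsSymm) {k h : Fin m} (hhk : h < k) :
    ∃ Y : Fin (n+1) → Matrix (Fin m) (Fin m) ℝ,
      (Y 0).IsSymm ∧ hinf Y ≤ 1 ∧ ∑ j, (Z j * (Y j)ᵀ).trace = ∑ j, (|Z j k h| + |Z j h k|) := by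
  classical
  refine ⟨fun j => Matrix.single k h (SignType.sign (Z j k h) : ℝ)
    + Matrix.single h k (SignType.sign (Z j h k) : ℝ), ?_, ?_, ?_⟩
  · simp [Matrix.IsSymm, Matrix.transpose_single, hZ0.apply k h, add_comm]
  · rw [hinf_eq_norm_offDiagPair hhk fun j a b _ hne₁ hne₂ => by
      simp [Matrix.single_apply_of_ne _ _ _ _ _ (fun he => hne₁ ⟨he.1.symm, he.2.symm⟩),
        Matrix.single_apply_of_ne _ _ _ _ _ (fun he => hne₂ ⟨he.1.symm, he.2.symm⟩)]]
    refine (pi_norm_le_iff_of_nonneg zero_le_one).2 fun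
      | (j, false) => ?_
      | (j, true) => ?_
    all_goals
      simp only [offDiagPair, Matrix.add_apply, Real.norm_eq_abs]
      simp [hhk.ne, hhk.ne', abs_sign_le_one]
  · simp [Matrix.transpose_single, Matrix.mul_add, Matrix.trace_add, sum_add_distrib,
      Matrix.trace_mul_single]

theorem exists_isSymm_hinf_le_one_sum_trace_eq_of_ne {Z : Fin (n+1) → Matrix (Fin m) (Fin m) ℝ}
    (hZ0 : (Z 0).IsSymm) {k h : Fin m} (hkh : k ≠ h) :
    ∃ Y : Fin (n+1) → Matrix (Fin m) (Fin m) ℝ,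
      (Y 0).IsSymm ∧ hinf Y ≤ 1 ∧ ∑ j, (Z j * (Y j)ᵀ).trace = ∑ j, (|Z j k h| + |Z j h k|) := by
  rcases hkh.lt_or_gt with hlt | hgt
  · simp_rw [add_comm |Z _ k h|]
    exact exists_isSymm_hinf_le_one_sum_trace_eq hZ0 hlt
  · exact exists_isSymm_hinf_le_one_sum_trace_eq hZ0 hgt

theorem forall_isSymm_mul_hinf_sub_sum_trace_nonneg_iff {c : ℝ} (hc : 0 ≤ c)
    {Z : Fin (n+1) → Matrix (Fin m) (Fin m) ℝ} (hZ0 : (Z 0).IsSymm) :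
    (∀ Y : Fin (n+1) → Matrix (Fin m) (Fin m) ℝ,
        (Y 0).IsSymm → 0 ≤ c * hinf Y - ∑ j, (Z j * (Y j)ᵀ).trace) ↔
      (∀ j i, Z j i i = 0) ∧ ∀ k h, k ≠ h → ∑ j, (|Z j k h| + |Z j h k|) ≤ c := by
  refine ⟨fun hnonneg => ⟨fun j i => ?_, fun k h hkh => ?_⟩, fun ⟨hdiag, hbound⟩ Y _ =>
    sub_nonneg.2 (sum_trace_mul_transpose_le_mul_hinf hdiag hbound Y)⟩
  · by_contra hji
    obtain ⟨Y, hY0, hYh, hYtr⟩ := exists_isSymm_hinf_eq_zero_sum_trace_pos hji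
    have := hnonneg Y hY0
    rw [hYh, mul_zero] at this
    linarith
  · obtain ⟨Y, hY0, hYh, hYtr⟩ := exists_isSymm_hinf_le_one_sum_trace_eq_of_ne hZ0 hkh
    have := hnonneg Y hY0
    rw [hYtr] at this
    linarith [mul_le_of_le_one_right hc hYh]

end GroupSparsity

/-- the infimum over `Y` of `λγ h_∞(Y) − tr(Z Yᵀ)` is `0` when
`diag(Z_j) = 0` for all `j` and `Σ_j (|(Z_j)_{kh}| + |(Z_j)_{hk}|) ≤ λγ` for all
`k ≠ h`, and `−∞` otherwise. -/
theorem stmt_10 (m n : ℕ) (lam gam : ℝ) (hlam : 0 < lam) (hgam : 0 < gam)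
    (Z : Fin (n+1) → Matrix (Fin m) (Fin m) ℝ) (hZ0 : (Z 0).IsSymm) :
    (⨅ Y : {Y : Fin (n+1) → Matrix (Fin m) (Fin m) ℝ // (Y 0).IsSymm},
        ((lam * gam * hinf Y.1 - ∑ j : Fin (n+1), (Z j * (Y.1 j)ᵀ).trace : ℝ) : EReal))
      = if (∀ (j : Fin (n+1)) (i : Fin m), Z j i i = 0)
            ∧ (∀ k h : Fin m, k ≠ h → ∑ j : Fin (n+1), (|Z j k h| + |Z j h k|) ≤ lam * gam)
        then (0 : EReal) else ⊥ := by
  have hsymm : ∀ t : ℝ, 0 ≤ t → ∀ Y : Fin (n+1) → Matrix (Fin m) (Fin m) ℝ,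
      (Y 0).IsSymm → ((t • Y) 0).IsSymm := fun t _ Y hY => hY.smul t
  have hhomog : ∀ t : ℝ, 0 ≤ t → ∀ Y : Fin (n+1) → Matrix (Fin m) (Fin m) ℝ,
      lam * gam * hinf (t • Y) - ∑ j, (Z j * ((t • Y) j)ᵀ).trace
        = t * (lam * gam * hinf Y - ∑ j, (Z j * (Y j)ᵀ).trace) := fun t ht Y => by
    rw [hinf_smul ht, sum_trace_mul_transpose_smul]
    ring
  refine (iInf_coe_eq_ite_of_posHomogeneous (P := fun Y => (Y 0).IsSymm)
    (f := fun Y => lam * gam * hinf Y - ∑ j, (Z j * (Y j)ᵀ).trace)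
    Matrix.isSymm_zero hsymm hhomog).trans ?_
  classical
  exact if_congr (forall_isSymm_mul_hinf_sub_sum_trace_nonneg_iff (by positivity) hZ0) rfl rfl
end

section
/- (von Neumann trace inequality) For complex m×m matrices Φ and Λ, Re tr(Φ Λ*) ≤ Σ_{k=1}^m σ_k(Φ) σ_k(Λ), where σ_k denotes the k-th largest singular value. -/
open Matrix Finset
open scoped ComplexOrder

/-!
Take singular value decompositions `Φ = U₁ diag(σ) V₁ᴴ` and `Λ = U₂ diag(τ) V₂ᴴ`. Then
`Re tr(Φ Λᴴ) = Σᵢⱼ σᵢ τⱼ Re(Aᵢⱼ Bⱼᵢ)` for the unitary matrices `A = V₁ᴴ V₂` and `B = U₂ᴴ U₁`,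
and `Re(Aᵢⱼ Bⱼᵢ) ≤ Sᵢⱼ := (|Aᵢⱼ|² + |Bⱼᵢ|²) / 2`. The rows and columns of a unitary matrix are
unit vectors, so `S` is doubly stochastic. By Birkhoff's theorem the linear form
`S ↦ Σᵢⱼ σᵢ τⱼ Sᵢⱼ` is maximised at a permutation matrix, and by the rearrangement inequality
the best permutation pairs the singular values in decreasing order.
-/

section Rearrangement

variable {n : Type*} [Fintype n]

theorem Monovary.dotProduct_comp_perm_le {f g : n → ℝ} (hfg : Monovary f g)
    (α β : Equiv.Perm n) : (f ∘ α) ⬝ᵥ (g ∘ β) ≤ f ⬝ᵥ g := by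
  calc (f ∘ α) ⬝ᵥ (g ∘ β) = ∑ i, f i • g (β (α.symm i)) := by
        simp only [dotProduct, Function.comp_apply, smul_eq_mul]
        exact (Equiv.sum_comp α.symm _).symm.trans (by simp)
    _ ≤ ∑ i, f i • g i := hfg.sum_smul_comp_perm_le_sum_smul (σ := α.symm.trans β)
    _ = f ⬝ᵥ g := rfl

variable [DecidableEq n]

theorem dotProduct_mulVec_le_of_forall_perm {f g : n → ℝ} {c : ℝ}
    (h : ∀ π : Equiv.Perm n, f ⬝ᵥ (g ∘ π) ≤ c) {S : Matrix n n ℝ}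
    (hS : S ∈ doublyStochastic ℝ n) : f ⬝ᵥ S *ᵥ g ≤ c := by
  have hconvex : Convex ℝ {M : Matrix n n ℝ | f ⬝ᵥ M *ᵥ g ≤ c} :=
    convex_halfSpace_le ⟨fun M N => by simp only [add_mulVec, dotProduct_add],
      fun r M => by simp only [smul_mulVec, dotProduct_smul]⟩ c
  have hperm : Set.range (fun π : Equiv.Perm n => π.permMatrix ℝ) ⊆
      {M : Matrix n n ℝ | f ⬝ᵥ M *ᵥ g ≤ c} := by
    rintro _ ⟨π, rfl⟩
    simpa only [Set.mem_ofPred_eq, permMatrix_mulVec] using h π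
  rw [← SetLike.mem_coe, doublyStochastic_eq_convexHull_permMatrix] at hS
  exact convexHull_min hperm hconvex hS

end Rearrangement

section Unitary

variable {𝕜 n : Type*} [RCLike 𝕜] [Fintype n] [DecidableEq n]

theorem sum_norm_sq_apply_eq_one_of_mem_unitaryGroup {U : Matrix n n 𝕜}
    (hU : U ∈ unitaryGroup n 𝕜) (i : n) : ∑ j, ‖U i j‖ ^ 2 = 1 := by
  have h := congr_fun₂ (mem_unitaryGroup_iff.mp hU) i i
  simp only [mul_apply, star_apply, RCLike.star_def, RCLike.mul_conj, one_apply_eq] at h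
  exact_mod_cast h

theorem of_norm_sq_mem_doublyStochastic {U : Matrix n n 𝕜} (hU : U ∈ unitaryGroup n 𝕜) :
    of (fun i j => ‖U i j‖ ^ 2) ∈ doublyStochastic ℝ n := by
  refine mem_doublyStochastic_iff_sum.mpr ⟨fun i j => sq_nonneg _,
    sum_norm_sq_apply_eq_one_of_mem_unitaryGroup hU, fun j => ?_⟩
  simpa [star_apply] using sum_norm_sq_apply_eq_one_of_mem_unitaryGroup (Unitary.star_mem hU) j

theorem exists_unitary_mul_diagonal_of_conjTranspose_mul_self_eq {B : Matrix n n 𝕜}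
    {d : n → ℝ} (hB : Bᴴ * B = diagonal fun i => ((d i ^ 2 : ℝ) : 𝕜)) :
    ∃ U ∈ unitaryGroup n 𝕜, B = U * diagonal fun i => (d i : 𝕜) := by
  set c : n → EuclideanSpace 𝕜 n := fun j => WithLp.toLp 2 fun i => B i j
  have hc : ∀ j k, inner 𝕜 (c j) (c k) = (Bᴴ * B) j k := fun j k => by
    simp only [c, EuclideanSpace.inner_toLp_toLp, dotProduct, mul_apply, conjTranspose_apply,
      Pi.star_apply, mul_comm]
  have hc_zero : ∀ j, d j = 0 → c j = 0 := fun j hj => by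
    rw [← inner_self_eq_zero (𝕜 := 𝕜), hc, hB]
    simp [hj]
  set s : Set n := {j | d j ≠ 0}
  have hs : ∀ j ∈ s, (d j : 𝕜) ≠ 0 := fun j hj => by exact_mod_cast hj
  have hortho : Orthonormal 𝕜 (s.domRestrict fun j => (d j : 𝕜)⁻¹ • c j) := by
    rw [orthonormal_iff_ite]
    rintro ⟨j, hj⟩ ⟨k, hk⟩
    simp only [Set.domRestrict_apply, inner_smul_left, inner_smul_right, hc, hB, diagonal_apply,
      Subtype.mk.injEq]
    split_ifs with h
    · subst h
      simp only [map_inv₀, RCLike.conj_ofReal, map_pow]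
      field_simp [hs j hj]
    · simp
  obtain ⟨b, hb⟩ := hortho.exists_orthonormalBasis_extension_of_card_eq (by simp)
  refine ⟨_, (EuclideanSpace.basisFun n 𝕜).toMatrix_orthonormalBasis_mem_unitary b, ?_⟩
  ext i j
  rw [mul_diagonal]
  by_cases hj : d j = 0
  · simpa [hj] using congr_arg (· i) (hc_zero j hj)
  · simp only [Module.Basis.toMatrix_apply, hb j hj,
      OrthonormalBasis.coe_toBasis_repr_apply, EuclideanSpace.basisFun_repr, PiLp.smul_apply,
      smul_eq_mul, c]
    field_simp [hs j hj]

theorem exists_unitary_mul_diagonal_mul_conjTranspose (A : Matrix n n 𝕜) :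
    ∃ U ∈ unitaryGroup n 𝕜, ∃ V ∈ unitaryGroup n 𝕜, A = U *
      diagonal (fun i => (√((posSemidef_conjTranspose_mul_self A).1.eigenvalues i) : 𝕜)) * Vᴴ := by
  set hA := posSemidef_conjTranspose_mul_self A
  set V : Matrix n n 𝕜 := (hA.1.eigenvectorUnitary : Matrix n n 𝕜)
  have hAV : (A * V)ᴴ * (A * V) =
      diagonal fun i => ((√(hA.1.eigenvalues i) ^ 2 : ℝ) : 𝕜) := by
    have h := hA.1.conjStarAlgAut_star_eigenvectorUnitary
    rw [Unitary.conjStarAlgAut_star_apply] at h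
    simp only [Real.sq_sqrt (hA.eigenvalues_nonneg _)]
    rw [conjTranspose_mul, ← star_eq_conjTranspose, mul_assoc, ← mul_assoc Aᴴ, ← mul_assoc, h]
    rfl
  obtain ⟨U, hU, hAV⟩ := exists_unitary_mul_diagonal_of_conjTranspose_mul_self_eq hAV
  refine ⟨U, hU, V, hA.1.eigenvectorUnitary.2, ?_⟩
  rw [← hAV, mul_assoc, ← star_eq_conjTranspose, Unitary.mul_star_self_of_mem
    hA.1.eigenvectorUnitary.2, mul_one]

theorem trace_diagonal_mul_mul_diagonal_mul (f g : n → 𝕜) (A B : Matrix n n 𝕜) :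
    (diagonal f * A * diagonal g * B).trace = ∑ i, ∑ j, f i * g j * (A i j * B j i) := by
  simp only [trace, diag_apply, mul_apply (N := B), mul_diagonal, diagonal_mul]
  exact sum_congr rfl fun i _ => sum_congr rfl fun j _ => by ring

theorem re_trace_diagonal_mul_mul_diagonal_mul_le {A B : Matrix n n 𝕜}
    (hA : A ∈ unitaryGroup n 𝕜) (hB : B ∈ unitaryGroup n 𝕜) {f g : n → ℝ}
    (hf : ∀ i, 0 ≤ f i) (hg : ∀ i, 0 ≤ g i) {c : ℝ}
    (h : ∀ π : Equiv.Perm n, f ⬝ᵥ (g ∘ π) ≤ c) :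
    RCLike.re (diagonal (fun i => (f i : 𝕜)) * A * diagonal (fun i => (g i : 𝕜)) * B).trace
      ≤ c := by
  set S : Matrix n n ℝ := (1 / 2 : ℝ) • of (fun i j => ‖A i j‖ ^ 2) +
    (1 / 2 : ℝ) • of (fun i j => ‖Bᴴ i j‖ ^ 2)
  have hS : S ∈ doublyStochastic ℝ n :=
    convex_doublyStochastic (of_norm_sq_mem_doublyStochastic hA)
      (of_norm_sq_mem_doublyStochastic (Unitary.star_mem hB)) (by norm_num) (by norm_num)
      (by norm_num)
  refine le_trans ?_ (dotProduct_mulVec_le_of_forall_perm h hS)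
  have hentry : ∀ i j, RCLike.re (A i j * B j i) ≤ S i j := fun i j => by
    calc RCLike.re (A i j * B j i) ≤ ‖A i j‖ * ‖B j i‖ :=
          (RCLike.re_le_norm _).trans (norm_mul _ _).le
      _ ≤ S i j := by
        simp only [S, Matrix.add_apply, Matrix.smul_apply, of_apply, conjTranspose_apply,
          norm_star, smul_eq_mul]
        nlinarith [sq_nonneg (‖A i j‖ - ‖B j i‖)]
  calc _ = ∑ i, ∑ j, f i * g j * RCLike.re (A i j * B j i) := by
        simp only [trace_diagonal_mul_mul_diagonal_mul, map_sum, ← RCLike.ofReal_mul,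
          RCLike.re_ofReal_mul]
    _ ≤ ∑ i, ∑ j, f i * g j * S i j := by
        gcongr with i _ j _
        · exact mul_nonneg (hf i) (hg j)
        · exact hentry i j
    _ = f ⬝ᵥ S *ᵥ g := by
        simp only [dotProduct, mulVec, Finset.mul_sum]
        exact sum_congr rfl fun i _ => sum_congr rfl fun j _ => by ring

end Unitary

theorem sdesc_antitone {m : ℕ} (A : Matrix (Fin m) (Fin m) ℂ) : Antitone (sdesc A) :=
  fun _ _ hij => Tuple.monotone_sort (singularValues A) (Fin.rev_le_rev.mpr hij)

theorem exists_perm_singularValues_eq_sdesc_comp {m : ℕ} (A : Matrix (Fin m) (Fin m) ℂ) :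
    ∃ α : Equiv.Perm (Fin m), singularValues A = sdesc A ∘ α :=
  ⟨(Tuple.sort (singularValues A)).symm.trans Fin.revPerm, by ext; simp [sdesc]⟩

theorem singularValues_dotProduct_comp_perm_le {m : ℕ} (Φ Λ : Matrix (Fin m) (Fin m) ℂ)
    (π : Equiv.Perm (Fin m)) :
    singularValues Φ ⬝ᵥ (singularValues Λ ∘ π) ≤ ∑ k, sdesc Φ k * sdesc Λ k := by
  obtain ⟨α, hα⟩ := exists_perm_singularValues_eq_sdesc_comp Φ
  obtain ⟨β, hβ⟩ := exists_perm_singularValues_eq_sdesc_comp Λ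
  rw [hα, hβ]
  exact ((sdesc_antitone Φ).monovary (sdesc_antitone Λ)).dotProduct_comp_perm_le α (π.trans β)

/-- von Neumann trace inequality:
`Re tr(Φ Λ*) ≤ Σ_k σ_k(Φ) σ_k(Λ)` with singular values in decreasing order. -/
theorem stmt_12 (m : ℕ) (Φ Λ : Matrix (Fin m) (Fin m) ℂ) :
    (Φ * Λᴴ).trace.re ≤ ∑ k : Fin m, sdesc Φ k * sdesc Λ k := by
  obtain ⟨U₁, hU₁, V₁, hV₁, hΦ⟩ := exists_unitary_mul_diagonal_mul_conjTranspose Φ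
  obtain ⟨U₂, hU₂, V₂, hV₂, hΛ⟩ := exists_unitary_mul_diagonal_mul_conjTranspose Λ
  have htrace : (Φ * Λᴴ).trace = (diagonal (fun i => (singularValues Φ i : ℂ)) * (V₁ᴴ * V₂) *
      diagonal (fun i => (singularValues Λ i : ℂ)) * (U₂ᴴ * U₁)).trace := by
    conv_lhs => rw [hΦ, hΛ]
    simp only [conjTranspose_mul, conjTranspose_conjTranspose, diagonal_conjTranspose,
      Pi.star_def, RCLike.star_def, RCLike.conj_ofReal, mul_assoc]
    rw [trace_mul_comm U₁]
    simp only [mul_assoc]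
    rfl
  rw [htrace]
  exact re_trace_diagonal_mul_mul_diagonal_mul_le (mul_mem (Unitary.star_mem hV₁) hV₂)
    (mul_mem (Unitary.star_mem hU₂) hU₁) (fun i => Real.sqrt_nonneg _)
    (fun i => Real.sqrt_nonneg _) (singularValues_dotProduct_comp_perm_le Φ Λ)
end

section
/- (Matrix case of convex hull of restricted rank) For a Hermitian m×m matrix Λ, define rank'(Λ) = rank(Λ) if the operator norm ||Λ|| ≤ 1 and +∞ otherwise. Then the biconjugate (convex hull) of rank' equals the function Λ ↦ Σ_{k=1}^m σ_k(Λ) (the nuclear norm) when ||Λ|| ≤ 1 and +∞ otherwise. -/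
open Matrix Finset
open scoped ComplexOrder

/-- The restricted rank function: `rank(Λ)` if `‖Λ‖ ≤ 1`, `+∞` otherwise. -/
noncomputable def rankRestr {m : ℕ} (Λ : Matrix (Fin m) (Fin m) ℂ) : EReal :=
  if opNorm Λ ≤ 1 then ((Λ.rank : ℝ) : EReal) else ⊤

/-- Conjugate with respect to the real inner product `⟨Φ,Λ⟩ = Re tr(Φ Λ*)` on
Hermitian matrices. -/
noncomputable def conjH {m : ℕ} (f : Matrix (Fin m) (Fin m) ℂ → EReal)
    (Φ : Matrix (Fin m) (Fin m) ℂ) : EReal :=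
  ⨆ (Λ : Matrix (Fin m) (Fin m) ℂ) (_ : Λ.IsHermitian),
    ((((Φ * Λᴴ).trace.re : ℝ) : EReal) - f Λ)


section Helpers
open Polynomial

variable {m : ℕ}


lemma charpoly_conj (U V M : Matrix (Fin m) (Fin m) ℂ) (h1 : U * V = 1) :
    (U * M * V).charpoly = M.charpoly := by
  have h2 : V * U = 1 := mul_eq_one_comm.mp h1
  have hmapC : ∀ (A B : Matrix (Fin m) (Fin m) ℂ), (A * B).map (C : ℂ →+* ℂ[X]) = A.map C * B.map C :=
    fun A B => Matrix.map_mul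
  have hUV : (U.map (C : ℂ →+* ℂ[X])) * (V.map C) = 1 := by
    rw [← hmapC, h1, Matrix.map_one _ (map_zero _) (map_one _)]
  have key : charmatrix (U * M * V) = U.map (C : ℂ →+* ℂ[X]) * charmatrix M * V.map C := by
    rw [charmatrix, charmatrix]
    rw [Matrix.mul_sub, Matrix.sub_mul]
    congr 1
    · rw [← (Matrix.scalar_commute X (fun r => Commute.all X r) (U.map C)).eq,
        Matrix.mul_assoc, hUV, Matrix.mul_one]
    · show C.mapMatrix (U * M * V) = _
      rw [_root_.map_mul, _root_.map_mul]
      rfl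
  rw [Matrix.charpoly, key, Matrix.det_mul, Matrix.det_mul, mul_comm, ← mul_assoc,
    ← Matrix.det_mul, ← hmapC, h2, Matrix.map_one _ (map_zero _) (map_one _),
    Matrix.det_one, one_mul, Matrix.charpoly]

lemma charpoly_diag (d : Fin m → ℂ) :
    (Matrix.diagonal d).charpoly = ∏ i : Fin m, (X - C (d i)) := by
  rw [Matrix.charpoly_of_upperTriangular _ (Matrix.blockTriangular_diagonal d)]
  simp [Matrix.diagonal_apply_eq]

lemma roots_charpoly_conj_diag (U : Matrix (Fin m) (Fin m) ℂ)
    (hU : U ∈ Matrix.unitaryGroup (Fin m) ℂ) (d : Fin m → ℂ) :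
    (U * Matrix.diagonal d * Uᴴ).charpoly.roots = Multiset.map d Finset.univ.val := by
  have h1 : U * Uᴴ = 1 := hU.2
  rw [charpoly_conj U Uᴴ _ h1, charpoly_diag]
  rw [Finset.prod_eq_multiset_prod,
    show Multiset.map (fun i => X - C (d i)) univ.val
      = Multiset.map (fun a => X - C a) (Multiset.map d univ.val) by
      rw [Multiset.map_map]; rfl,
    Polynomial.roots_multiset_prod_X_sub_C]

lemma eig_multiset {M : Matrix (Fin m) (Fin m) ℂ} (hM : M.IsHermitian)
    (U : Matrix (Fin m) (Fin m) ℂ) (hU : U ∈ Matrix.unitaryGroup (Fin m) ℂ)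
    (d : Fin m → ℝ) (hdec : M = U * Matrix.diagonal (fun i => (d i : ℂ)) * Uᴴ) :
    Multiset.map hM.eigenvalues univ.val = Multiset.map d univ.val := by
  have hE : M = (hM.eigenvectorUnitary : Matrix (Fin m) (Fin m) ℂ)
      * Matrix.diagonal (fun i => ((hM.eigenvalues i : ℝ) : ℂ))
      * (hM.eigenvectorUnitary : Matrix (Fin m) (Fin m) ℂ)ᴴ := hM.spectral_theorem
  have h1 := roots_charpoly_conj_diag _ hM.eigenvectorUnitary.2
    (fun i => ((hM.eigenvalues i : ℝ) : ℂ))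
  rw [← hE] at h1
  have h2 := roots_charpoly_conj_diag U hU (fun i => ((d i : ℝ) : ℂ))
  rw [← hdec] at h2
  have h3 := h1.symm.trans h2
  apply Multiset.map_injective Complex.ofReal_injective
  rw [Multiset.map_map, Multiset.map_map]
  exact h3

lemma sv_eq_sqrt_eig {A : Matrix (Fin m) (Fin m) ℂ} (hA : A.IsHermitian) :
    Aᴴ * A = (hA.eigenvectorUnitary : Matrix (Fin m) (Fin m) ℂ)
      * Matrix.diagonal (fun i => ((hA.eigenvalues i ^ 2 : ℝ) : ℂ))
      * (hA.eigenvectorUnitary : Matrix (Fin m) (Fin m) ℂ)ᴴ := by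
  set U : Matrix (Fin m) (Fin m) ℂ := (hA.eigenvectorUnitary : Matrix (Fin m) (Fin m) ℂ) with hUdef
  have hUU : Uᴴ * U = 1 := hA.eigenvectorUnitary.2.1
  have hdecA : A = U * Matrix.diagonal (fun i => ((hA.eigenvalues i : ℝ) : ℂ)) * Uᴴ :=
    hA.spectral_theorem
  have hAH : Aᴴ = A := hA
  rw [hAH]
  conv_lhs => rw [hdecA]
  simp only [Matrix.mul_assoc]
  rw [← Matrix.mul_assoc Uᴴ U, hUU, Matrix.one_mul,
    ← Matrix.mul_assoc (Matrix.diagonal _) (Matrix.diagonal _), Matrix.diagonal_mul_diagonal]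
  congr 2
  funext i
  push_cast
  ring

lemma sv_multiset {A : Matrix (Fin m) (Fin m) ℂ} (hA : A.IsHermitian) :
    Multiset.map (singularValues A) univ.val
      = Multiset.map (fun i => |hA.eigenvalues i|) univ.val := by
  have h := eig_multiset (Matrix.posSemidef_conjTranspose_mul_self A).1
    _ hA.eigenvectorUnitary.2 _ (sv_eq_sqrt_eig hA)
  have h1 : Multiset.map (singularValues A) univ.val
      = Multiset.map Real.sqrt
        (Multiset.map (Matrix.posSemidef_conjTranspose_mul_self A).1.eigenvalues univ.val) := by
    rw [Multiset.map_map]; rfl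
  rw [h1, h, Multiset.map_map]
  congr 1
  funext i
  simp only [Function.comp_apply]
  exact Real.sqrt_sq_eq_abs _


/-- transfer a pointwise predicate along multiset equality -/
lemma forall_transfer {f g : Fin m → ℝ}
    (h : Multiset.map f univ.val = Multiset.map g univ.val) (p : ℝ → Prop) :
    (∀ i, p (f i)) → (∀ i, p (g i)) := by
  intro H i
  have hmem : g i ∈ Multiset.map g univ.val :=
    Multiset.mem_map_of_mem _ (Finset.mem_univ i)
  rw [← h] at hmem
  obtain ⟨j, -, hj⟩ := Multiset.mem_map.mp hmem
  rw [← hj]; exact H j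

lemma sum_transfer {f g : Fin m → ℝ}
    (h : Multiset.map f univ.val = Multiset.map g univ.val) :
    ∑ i, f i = ∑ i, g i := by
  rw [Finset.sum_eq_multiset_sum, Finset.sum_eq_multiset_sum, h]

lemma sv_le_of_opNorm_le {A : Matrix (Fin m) (Fin m) ℂ} {c : ℝ} (h : opNorm A ≤ c) (i : Fin m) :
    singularValues A i ≤ c :=
  (le_ciSup (Set.Finite.bddAbove (Set.finite_range _)) i).trans h

lemma opNorm_le {A : Matrix (Fin m) (Fin m) ℂ} {c : ℝ} [Nonempty (Fin m)]
    (h : ∀ i, singularValues A i ≤ c) : opNorm A ≤ c :=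
  ciSup_le h

/-- eigenvalues of a Hermitian matrix are bounded by the operator norm -/
lemma abs_eig_le_of_opNorm_le {A : Matrix (Fin m) (Fin m) ℂ} (hA : A.IsHermitian) {c : ℝ}
    (h : opNorm A ≤ c) (i : Fin m) : |hA.eigenvalues i| ≤ c :=
  forall_transfer (sv_multiset hA) (· ≤ c) (fun j => sv_le_of_opNorm_le h j) i

lemma opNorm_le_of_abs_eig {A : Matrix (Fin m) (Fin m) ℂ} (hA : A.IsHermitian) {c : ℝ}
    [Nonempty (Fin m)] (h : ∀ i, |hA.eigenvalues i| ≤ c) : opNorm A ≤ c :=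
  opNorm_le (forall_transfer (sv_multiset hA).symm (· ≤ c) h)

lemma sum_sv_eq_sum_abs_eig {A : Matrix (Fin m) (Fin m) ℂ} (hA : A.IsHermitian) :
    ∑ i, singularValues A i = ∑ i, |hA.eigenvalues i| :=
  sum_transfer (sv_multiset hA)

/-- Master trace formula -/
lemma trace_conj_conj (U V : Matrix (Fin m) (Fin m) ℂ)
    (hU : U ∈ Matrix.unitaryGroup (Fin m) ℂ) (hV : V ∈ Matrix.unitaryGroup (Fin m) ℂ)
    (a b : Fin m → ℝ) :
    ((U * Matrix.diagonal (fun i => (a i : ℂ)) * Uᴴ) *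
      (V * Matrix.diagonal (fun i => (b i : ℂ)) * Vᴴ)).trace
      = ((∑ i, ∑ j, a i * b j * Complex.normSq ((Uᴴ * V) i j) : ℝ) : ℂ) := by
  set W : Matrix (Fin m) (Fin m) ℂ := Uᴴ * V with hW
  set Da : Matrix (Fin m) (Fin m) ℂ := Matrix.diagonal (fun i => (a i : ℂ)) with hDa
  set Db : Matrix (Fin m) (Fin m) ℂ := Matrix.diagonal (fun i => (b i : ℂ)) with hDb
  have hUU : U * Uᴴ = 1 := hU.2
  have hU1 : Uᴴ * U = 1 := hU.1
  have key : (U * Da * Uᴴ) * (V * Db * Vᴴ) = U * (Da * W * Db * Wᴴ) * Uᴴ := by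
    have hWH : Wᴴ = Vᴴ * U := by
      rw [hW, Matrix.conjTranspose_mul, Matrix.conjTranspose_conjTranspose]
    rw [hWH, hW]
    simp only [Matrix.mul_assoc]
    rw [hUU, Matrix.mul_one]
  rw [key, Matrix.trace_mul_cycle, ← Matrix.mul_assoc, ← Matrix.mul_assoc, hU1, Matrix.one_mul]
  have hentry : ∀ i j, (Da * W * Db) i j = (a i : ℂ) * W i j * (b j : ℂ) := by
    intro i j
    rw [Matrix.mul_diagonal, hDa, Matrix.mul_apply]
    simp [Matrix.diagonal_apply, ite_mul]
  rw [Matrix.trace]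
  push_cast
  apply Finset.sum_congr rfl
  intro i _
  rw [Matrix.diag_apply, Matrix.mul_apply]
  apply Finset.sum_congr rfl
  intro j _
  rw [hentry, Matrix.conjTranspose_apply]
  have hc : W i j * star (W i j) = (Complex.normSq (W i j) : ℂ) := Complex.mul_conj _
  push_cast
  calc (a i : ℂ) * W i j * (b j) * star (W i j)
      = (a i : ℂ) * (b j) * (W i j * star (W i j)) := by ring
    _ = (a i : ℂ) * (b j) * (Complex.normSq (W i j) : ℂ) := by rw [hc]
    _ = _ := by ring

lemma row_sum_normSq {W : Matrix (Fin m) (Fin m) ℂ} (hW : W ∈ Matrix.unitaryGroup (Fin m) ℂ)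
    (i : Fin m) : ∑ j, Complex.normSq (W i j) = 1 := by
  have h2 : W * Wᴴ = 1 := hW.2
  have h := congrFun (congrFun h2 i) i
  rw [Matrix.mul_apply] at h
  have h1 : (1 : Matrix (Fin m) (Fin m) ℂ) i i = 1 := Matrix.one_apply_eq i
  rw [h1] at h
  have : ∀ j, W i j * Wᴴ j i = (Complex.normSq (W i j) : ℂ) := by
    intro j; rw [Matrix.conjTranspose_apply]; exact Complex.mul_conj _
  rw [Finset.sum_congr rfl (fun j _ => this j)] at h
  exact Complex.ofReal_injective (by push_cast; rw [h] :
    ((∑ j, Complex.normSq (W i j) : ℝ) : ℂ) = ((1 : ℝ) : ℂ))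

lemma col_sum_normSq {W : Matrix (Fin m) (Fin m) ℂ} (hW : W ∈ Matrix.unitaryGroup (Fin m) ℂ)
    (j : Fin m) : ∑ i, Complex.normSq (W i j) = 1 := by
  have h2 : Wᴴ * W = 1 := hW.1
  have h := congrFun (congrFun h2 j) j
  rw [Matrix.mul_apply] at h
  have h1 : (1 : Matrix (Fin m) (Fin m) ℂ) j j = 1 := Matrix.one_apply_eq j
  rw [h1] at h
  have : ∀ i, Wᴴ j i * W i j = (Complex.normSq (W i j) : ℂ) := by
    intro i; rw [Matrix.conjTranspose_apply, mul_comm]; exact Complex.mul_conj _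
  rw [Finset.sum_congr rfl (fun i _ => this i)] at h
  exact Complex.ofReal_injective (by push_cast; rw [h] :
    ((∑ i, Complex.normSq (W i j) : ℝ) : ℂ) = ((1 : ℝ) : ℂ))

lemma star_mul_mem_unitary {U V : Matrix (Fin m) (Fin m) ℂ}
    (hU : U ∈ Matrix.unitaryGroup (Fin m) ℂ) (hV : V ∈ Matrix.unitaryGroup (Fin m) ℂ) :
    Uᴴ * V ∈ Matrix.unitaryGroup (Fin m) ℂ :=
  mul_mem (Unitary.star_mem hU) hV

lemma conj_diag_isHermitian (U : Matrix (Fin m) (Fin m) ℂ) (c : Fin m → ℝ) :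
    (U * Matrix.diagonal (fun i => (c i : ℂ)) * Uᴴ).IsHermitian := by
  unfold Matrix.IsHermitian
  rw [Matrix.conjTranspose_mul, Matrix.conjTranspose_mul, Matrix.conjTranspose_conjTranspose,
    Matrix.diagonal_conjTranspose]
  have hD : (star fun i => ((c i : ℝ) : ℂ)) = fun i => ((c i : ℝ) : ℂ) := by
    funext i
    simp
  rw [hD, Matrix.mul_assoc]

lemma card_ne_zero_transfer {e d : Fin m → ℝ}
    (h : Multiset.map e univ.val = Multiset.map d univ.val) :
    Fintype.card {i // e i ≠ 0} = Fintype.card {i // d i ≠ 0} := by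
  classical
  rw [Fintype.card_subtype, Fintype.card_subtype]
  have key : ∀ f : Fin m → ℝ, (univ.filter (fun i => f i ≠ 0)).card
      = Multiset.card ((Multiset.map f univ.val).filter (fun x => x ≠ 0)) := by
    intro f
    rw [Multiset.filter_map, Multiset.card_map]
    rfl
  rw [key, key, h]

lemma rank_conj_diag (U : Matrix (Fin m) (Fin m) ℂ)
    (hU : U ∈ Matrix.unitaryGroup (Fin m) ℂ) (c : Fin m → ℝ) :
    (U * Matrix.diagonal (fun i => (c i : ℂ)) * Uᴴ).rank
      = Fintype.card {i // c i ≠ 0} := by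
  rw [(conj_diag_isHermitian U c).rank_eq_card_non_zero_eigs]
  exact card_ne_zero_transfer (eig_multiset (conj_diag_isHermitian U c) U hU c rfl)

lemma trace_conj_diag_same (U : Matrix (Fin m) (Fin m) ℂ)
    (hU : U ∈ Matrix.unitaryGroup (Fin m) ℂ) (a b : Fin m → ℝ) :
    ((U * Matrix.diagonal (fun i => (a i : ℂ)) * Uᴴ) *
      (U * Matrix.diagonal (fun i => (b i : ℂ)) * Uᴴ)).trace
      = ((∑ i, a i * b i : ℝ) : ℂ) := by
  rw [trace_conj_conj U U hU hU a b]
  norm_cast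
  have h1 : Uᴴ * U = 1 := hU.1
  rw [h1]
  apply Finset.sum_congr rfl
  intro i _
  rw [Finset.sum_eq_single i]
  · rw [Matrix.one_apply_eq]; norm_num
  · intro j _ hj
    rw [Matrix.one_apply_ne (Ne.symm hj)]
    norm_num
  · intro h; exact absurd (Finset.mem_univ i) h

lemma sum_mul_mul_le (a b : Fin m → ℝ) (p : Fin m → Fin m → ℝ) (hp : ∀ i j, 0 ≤ p i j)
    (cs : ∀ j, ∑ i, p i j = 1) (ha : ∀ i, |a i| ≤ 1) :
    ∑ i, ∑ j, a i * b j * p i j ≤ ∑ j, |b j| := by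
  have step1 : ∑ i, ∑ j, a i * b j * p i j ≤ ∑ i, ∑ j, |b j| * p i j := by
    apply Finset.sum_le_sum; intro i _
    apply Finset.sum_le_sum; intro j _
    calc a i * b j * p i j ≤ |a i * b j| * p i j := by
          apply mul_le_mul_of_nonneg_right (le_abs_self _) (hp i j)
      _ = |a i| * |b j| * p i j := by rw [abs_mul]
      _ ≤ 1 * |b j| * p i j := by
          apply mul_le_mul_of_nonneg_right
            (mul_le_mul_of_nonneg_right (ha i) (abs_nonneg _)) (hp i j)
      _ = |b j| * p i j := by ring
  calc ∑ i, ∑ j, a i * b j * p i j ≤ ∑ i, ∑ j, |b j| * p i j := step1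
    _ = ∑ j, |b j| * ∑ i, p i j := by
        rw [Finset.sum_comm]
        apply Finset.sum_congr rfl
        intro j _; rw [← Finset.mul_sum]
    _ = ∑ j, |b j| := by
        apply Finset.sum_congr rfl
        intro j _; rw [cs j, mul_one]

lemma sum_clip_bound (a b : Fin m → ℝ) (p : Fin m → Fin m → ℝ) (hp : ∀ i j, 0 ≤ p i j)
    (rs : ∀ i, ∑ j, p i j = 1) (cs : ∀ j, ∑ i, p i j = 1) (ha : ∀ i, |a i| ≤ 1) :
    ∑ i, ∑ j, a i * b j * p i j
      ≤ (∑ j, if 1 < |b j| then |b j| - 1 else 0) + ∑ i, |a i| := by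
  have termwise : ∀ i j, a i * b j * p i j
      ≤ (if 1 < |b j| then |b j| - 1 else 0) * p i j + |a i| * p i j := by
    intro i j
    have h1 : a i * b j * p i j ≤ |a i| * |b j| * p i j := by
      calc a i * b j * p i j ≤ |a i * b j| * p i j :=
            mul_le_mul_of_nonneg_right (le_abs_self _) (hp i j)
        _ = |a i| * |b j| * p i j := by rw [abs_mul]
    refine h1.trans ?_
    rw [← add_mul]
    apply mul_le_mul_of_nonneg_right _ (hp i j)
    by_cases hb : 1 < |b j|
    · rw [if_pos hb]
      nlinarith [abs_nonneg (a i), abs_nonneg (b j), ha i]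
    · rw [if_neg hb]
      push_neg at hb
      nlinarith [abs_nonneg (a i), abs_nonneg (b j), ha i]
  calc ∑ i, ∑ j, a i * b j * p i j
      ≤ ∑ i, ∑ j, ((if 1 < |b j| then |b j| - 1 else 0) * p i j + |a i| * p i j) :=
        Finset.sum_le_sum (fun i _ => Finset.sum_le_sum (fun j _ => termwise i j))
    _ = (∑ i, ∑ j, (if 1 < |b j| then |b j| - 1 else 0) * p i j)
        + ∑ i, ∑ j, |a i| * p i j := by rw [← Finset.sum_add_distrib]; simp [Finset.sum_add_distrib]
    _ = (∑ j, if 1 < |b j| then |b j| - 1 else 0) + ∑ i, |a i| := by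
        congr 1
        · rw [Finset.sum_comm]
          apply Finset.sum_congr rfl
          intro j _
          rw [← Finset.mul_sum, cs j, mul_one]
        · apply Finset.sum_congr rfl
          intro i _
          rw [← Finset.mul_sum, rs i, mul_one]


lemma ereal_coe_sub_top (x : ℝ) : (x : EReal) - ⊤ = ⊥ := by
  rw [sub_eq_add_neg, EReal.neg_top, EReal.add_bot]

lemma ereal_eq_top {x : EReal} (h : ∀ r : ℝ, (r : EReal) ≤ x) : x = ⊤ := by
  induction x using EReal.rec with
  | bot => exact absurd (h 0) (by simp)
  | coe y => exact absurd (EReal.coe_le_coe_iff.mp (h (y+1))) (by linarith)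
  | top => rfl

lemma opNorm_conj_diag_le {m : ℕ} [Nonempty (Fin m)] (V : Matrix (Fin m) (Fin m) ℂ)
    (hV : V ∈ Matrix.unitaryGroup (Fin m) ℂ) (c : Fin m → ℝ) (hc : ∀ i, |c i| ≤ 1) :
    opNorm (V * Matrix.diagonal (fun i => (c i : ℂ)) * Vᴴ) ≤ 1 :=
  opNorm_le_of_abs_eig (conj_diag_isHermitian V c)
    (forall_transfer (eig_multiset (conj_diag_isHermitian V c) V hV c rfl).symm
      (fun x => |x| ≤ 1) hc)

/-- key lower bound on the conjugate of the restricted rank: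
`(rankRestr)^*(Φ) ≥ Σ (|μ_i| - 1)_+`. -/
lemma conj_rank_ge {m : ℕ} [Nonempty (Fin m)] (Φ : Matrix (Fin m) (Fin m) ℂ)
    (hΦ : Φ.IsHermitian) :
    ((∑ j, if 1 < |hΦ.eigenvalues j| then |hΦ.eigenvalues j| - 1 else 0 : ℝ) : EReal)
      ≤ conjH rankRestr Φ := by
  classical
  set mu := hΦ.eigenvalues with hmu
  set V : Matrix (Fin m) (Fin m) ℂ := (hΦ.eigenvectorUnitary : Matrix (Fin m) (Fin m) ℂ) with hVdef
  have hV : V ∈ Matrix.unitaryGroup (Fin m) ℂ := hΦ.eigenvectorUnitary.2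
  have hdecΦ : Φ = V * Matrix.diagonal (fun i => ((mu i : ℝ) : ℂ)) * Vᴴ := hΦ.spectral_theorem
  set c : Fin m → ℝ := fun j => if 1 < |mu j| then (if 0 ≤ mu j then 1 else -1) else 0 with hc
  set X : Matrix (Fin m) (Fin m) ℂ := V * Matrix.diagonal (fun i => (c i : ℂ)) * Vᴴ with hX
  have hXH : X.IsHermitian := conj_diag_isHermitian V c
  have hcabs : ∀ j, |c j| ≤ 1 := by
    intro j
    rw [hc]
    dsimp only
    split_ifs <;> simp
  have hXnorm : opNorm X ≤ 1 := opNorm_conj_diag_le V hV c hcabs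
  have hrank : (X.rank : ℝ) = ∑ j, if 1 < |mu j| then 1 else 0 := by
    rw [hX, rank_conj_diag V hV c]
    have h1 : Fintype.card {i // c i ≠ 0} = Fintype.card {i // 1 < |mu i|} := by
      apply Fintype.card_congr
      apply Equiv.subtypeEquivRight
      intro j
      rw [hc]
      dsimp only
      constructor
      · intro h
        by_contra hj
        rw [if_neg hj] at h
        exact h rfl
      · intro h
        rw [if_pos h]
        split_ifs <;> norm_num
    rw [h1, Fintype.card_subtype, Finset.card_filter]
    push_cast
    rfl
  have hXeq : Xᴴ = X := hXH
  have htr : (Φ * Xᴴ).trace.re = ∑ j, if 1 < |mu j| then |mu j| else 0 := by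
    rw [hXeq, hX]
    conv_lhs => rw [hdecΦ]
    rw [trace_conj_diag_same V hV mu c, Complex.ofReal_re]
    apply Finset.sum_congr rfl
    intro j _
    rw [hc]
    dsimp only
    by_cases h1 : 1 < |mu j|
    · rw [if_pos h1, if_pos h1]
      rcases le_or_gt 0 (mu j) with h2 | h2
      · rw [if_pos h2, mul_one, abs_of_nonneg h2]
      · rw [if_neg (not_le.mpr h2), abs_of_neg h2]; ring
    · rw [if_neg h1, if_neg h1, mul_zero]
  have hrr : rankRestr X = ((X.rank : ℝ) : EReal) := by
    rw [rankRestr, if_pos hXnorm]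
  have step : (((∑ j, if 1 < |mu j| then |mu j| else 0 : ℝ) - (X.rank : ℝ) : ℝ) : EReal)
      ≤ conjH rankRestr Φ := by
    rw [conjH]
    refine le_trans ?_ (le_iSup₂_of_le X hXH le_rfl)
    rw [htr, hrr, EReal.coe_sub]
  refine le_trans (le_of_eq ?_) step
  norm_cast
  rw [hrank, ← Finset.sum_sub_distrib]
  apply Finset.sum_congr rfl
  intro j _
  by_cases h1 : 1 < |mu j|
  · rw [if_pos h1, if_pos h1, if_pos h1]
  · rw [if_neg h1, if_neg h1, if_neg h1]; ring

/-- packaged doubly-stochastic trace decomposition -/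
lemma trace_re_decomp {m : ℕ} (a : Fin m → ℝ) {X : Matrix (Fin m) (Fin m) ℂ}
    (hX : X.IsHermitian) (U : Matrix (Fin m) (Fin m) ℂ)
    (hU : U ∈ Matrix.unitaryGroup (Fin m) ℂ) :
    ∃ p : Fin m → Fin m → ℝ, (∀ i j, 0 ≤ p i j) ∧ (∀ i, ∑ j, p i j = 1) ∧
      (∀ j, ∑ i, p i j = 1) ∧
      ((U * Matrix.diagonal (fun i => (a i : ℂ)) * Uᴴ) * Xᴴ).trace.re
        = ∑ i, ∑ j, a i * hX.eigenvalues j * p i j := by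
  set V : Matrix (Fin m) (Fin m) ℂ := (hX.eigenvectorUnitary : Matrix (Fin m) (Fin m) ℂ)
  have hV : V ∈ Matrix.unitaryGroup (Fin m) ℂ := hX.eigenvectorUnitary.2
  have hdecX : X = V * Matrix.diagonal (fun i => ((hX.eigenvalues i : ℝ) : ℂ)) * Vᴴ :=
    hX.spectral_theorem
  have hW : Uᴴ * V ∈ Matrix.unitaryGroup (Fin m) ℂ := star_mul_mem_unitary hU hV
  refine ⟨fun i j => Complex.normSq ((Uᴴ * V) i j), fun i j => Complex.normSq_nonneg _,
    row_sum_normSq hW, col_sum_normSq hW, ?_⟩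
  have hXeq : Xᴴ = X := hX
  rw [hXeq]
  conv_lhs => rw [hdecX]
  rw [trace_conj_conj U V hU hV a hX.eigenvalues, Complex.ofReal_re]

lemma rank_real_eq {m : ℕ} {X : Matrix (Fin m) (Fin m) ℂ} (hX : X.IsHermitian) :
    (X.rank : ℝ) = ∑ j, if hX.eigenvalues j ≠ 0 then (1 : ℝ) else 0 := by
  classical
  rw [hX.rank_eq_card_non_zero_eigs, Fintype.card_subtype, Finset.card_filter]
  push_cast
  rfl

/-- the conjugate of restricted rank is ≤ 0 at Hermitian contractions -/
lemma conj_rank_le_zero {m : ℕ} {S : Matrix (Fin m) (Fin m) ℂ} (hS : S.IsHermitian)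
    (hSnorm : ∀ i, |hS.eigenvalues i| ≤ 1) : conjH rankRestr S ≤ 0 := by
  classical
  rw [conjH]
  apply iSup₂_le
  intro X hX
  by_cases hX1 : opNorm X ≤ 1
  · rw [rankRestr, if_pos hX1, ← EReal.coe_sub]
    rw [show (0 : EReal) = ((0 : ℝ) : EReal) from rfl, EReal.coe_le_coe_iff]
    rw [sub_nonpos]
    obtain ⟨p, hp, rs, cs, htr⟩ := trace_re_decomp hS.eigenvalues hX
      (hS.eigenvectorUnitary : Matrix (Fin m) (Fin m) ℂ) hS.eigenvectorUnitary.2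
    have hSd : S = (hS.eigenvectorUnitary : Matrix (Fin m) (Fin m) ℂ)
        * Matrix.diagonal (fun i => ((hS.eigenvalues i : ℝ) : ℂ))
        * (hS.eigenvectorUnitary : Matrix (Fin m) (Fin m) ℂ)ᴴ := hS.spectral_theorem
    rw [← hSd] at htr
    rw [htr]
    have hxi : ∀ j, |hX.eigenvalues j| ≤ 1 := abs_eig_le_of_opNorm_le hX hX1
    calc ∑ i, ∑ j, hS.eigenvalues i * hX.eigenvalues j * p i j
        ≤ ∑ j, |hX.eigenvalues j| := sum_mul_mul_le _ _ p hp cs hSnorm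
      _ ≤ ∑ j, if hX.eigenvalues j ≠ 0 then (1 : ℝ) else 0 := by
          apply Finset.sum_le_sum
          intro j _
          by_cases h : hX.eigenvalues j ≠ 0
          · rw [if_pos h]; exact hxi j
          · rw [if_neg h]; push_neg at h; rw [h]; simp
      _ = (X.rank : ℝ) := (rank_real_eq hX).symm
  · rw [rankRestr, if_neg hX1, ereal_coe_sub_top]
    exact bot_le

/-- the conjugate of restricted rank at `t · (rank-one sign)` is at most `t - 1` -/
lemma conj_rank_le_t {m : ℕ} (U : Matrix (Fin m) (Fin m) ℂ)
    (hU : U ∈ Matrix.unitaryGroup (Fin m) ℂ) (k : Fin m) (t sg : ℝ) (ht : 1 ≤ t)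
    (hsg : |sg| = 1) :
    conjH rankRestr
      (U * Matrix.diagonal (fun i => ((if i = k then t * sg else 0 : ℝ) : ℂ)) * Uᴴ)
      ≤ ((t - 1 : ℝ) : EReal) := by
  classical
  set c : Fin m → ℝ := fun i => if i = k then t * sg else 0 with hc
  rw [conjH]
  apply iSup₂_le
  intro X hX
  by_cases hX1 : opNorm X ≤ 1
  · rw [rankRestr, if_pos hX1, ← EReal.coe_sub, EReal.coe_le_coe_iff]
    obtain ⟨p, hp, rs, cs, htr⟩ := trace_re_decomp c hX U hU
    rw [htr]
    set xi := hX.eigenvalues with hxidef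
    have hxi : ∀ j, |xi j| ≤ 1 := abs_eig_le_of_opNorm_le hX hX1
    by_cases hz : ∀ j, xi j = 0
    · have h0 : ∑ i, ∑ j, c i * xi j * p i j = 0 := by
        apply Finset.sum_eq_zero; intro i _
        apply Finset.sum_eq_zero; intro j _
        rw [hz j]; ring
      have hr0 : (X.rank : ℝ) = 0 := by
        rw [rank_real_eq hX]
        apply Finset.sum_eq_zero; intro j _
        rw [if_neg (by simpa using hz j)]
      rw [h0, hr0]; linarith
    · push_neg at hz
      obtain ⟨j0, hj0⟩ := hz
      have hrank1 : (1 : ℝ) ≤ (X.rank : ℝ) := by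
        rw [rank_real_eq hX]
        calc (1:ℝ) = ∑ j, if j = j0 then (1:ℝ) else 0 := by simp
          _ ≤ ∑ j, if xi j ≠ 0 then (1:ℝ) else 0 := by
              apply Finset.sum_le_sum; intro j _
              by_cases h : j = j0
              · subst h; rw [if_pos rfl, if_pos hj0]
              · rw [if_neg h]; split_ifs <;> norm_num
      have htle : ∑ i, ∑ j, c i * xi j * p i j ≤ t := by
        have termb : ∀ i j, c i * xi j * p i j ≤ (if i = k then t else 0) * p i j := by
          intro i j
          rw [hc]; dsimp only
          by_cases h : i = k
          · rw [if_pos h, if_pos h]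
            have habs : |sg * xi j| ≤ 1 := by
              rw [abs_mul, hsg, one_mul]; exact hxi j
            have h2 : sg * xi j ≤ 1 := le_trans (le_abs_self _) habs
            have h1 : t * sg * xi j ≤ t := by
              rw [mul_assoc]
              calc t * (sg * xi j) ≤ t * 1 :=
                mul_le_mul_of_nonneg_left h2 (by linarith)
                _ = t := mul_one t
            exact mul_le_mul_of_nonneg_right h1 (hp i j)
          · rw [if_neg h, if_neg h]; simp
        have hcol : ∑ i, ∑ j, (if i = k then t else 0) * p i j = t := by
          have hrow : ∀ i, ∑ j, (if i = k then t else 0) * p i j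
              = if i = k then t else 0 := by
            intro i
            by_cases h : i = k
            · subst h
              simp only [if_pos rfl]
              rw [← Finset.mul_sum, rs, mul_one]
            · simp [h]
          rw [Finset.sum_congr rfl fun i _ => hrow i,
            Finset.sum_ite_eq' univ k fun _ => t, if_pos (Finset.mem_univ k)]
        calc ∑ i, ∑ j, c i * xi j * p i j
            ≤ ∑ i, ∑ j, (if i = k then t else 0) * p i j :=
              Finset.sum_le_sum fun i _ => Finset.sum_le_sum fun j _ => termb i j
          _ = t := hcol
      linarith
  · rw [rankRestr, if_neg hX1, ereal_coe_sub_top]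
    exact bot_le

end Helpers


theorem stmt_14 (m : ℕ) (hm : 0 < m) (Λ : Matrix (Fin m) (Fin m) ℂ)
    (hΛ : Λ.IsHermitian) :
    conjH (conjH rankRestr) Λ
      = if opNorm Λ ≤ 1 then (((∑ k : Fin m, singularValues Λ k : ℝ)) : EReal) else ⊤ := by
  haveI : Nonempty (Fin m) := Fin.pos_iff_nonempty.mp hm
  classical
  set lam := hΛ.eigenvalues with hlam
  set U : Matrix (Fin m) (Fin m) ℂ := (hΛ.eigenvectorUnitary : Matrix (Fin m) (Fin m) ℂ)
    with hUdef
  have hU : U ∈ Matrix.unitaryGroup (Fin m) ℂ := hΛ.eigenvectorUnitary.2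
  have hdec : Λ = U * Matrix.diagonal (fun i => ((lam i : ℝ) : ℂ)) * Uᴴ := hΛ.spectral_theorem
  have hsum : ∑ k, singularValues Λ k = ∑ i, |lam i| := sum_sv_eq_sum_abs_eig hΛ
  by_cases hop : opNorm Λ ≤ 1
  · rw [if_pos hop]
    have hlam1 : ∀ i, |lam i| ≤ 1 := abs_eig_le_of_opNorm_le hΛ hop
    apply le_antisymm
    · rw [conjH]
      apply iSup₂_le
      intro Φ hΦ
      obtain ⟨p, hp, rs, cs, htr⟩ := trace_re_decomp lam hΦ U hU
      rw [← hdec] at htr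
      have hgΦ := conj_rank_ge Φ hΦ
      have hreal : (Λ * Φᴴ).trace.re
          - (∑ j, if 1 < |hΦ.eigenvalues j| then |hΦ.eigenvalues j| - 1 else 0)
          ≤ ∑ k, singularValues Λ k := by
        rw [htr, hsum]
        have := sum_clip_bound lam hΦ.eigenvalues p hp rs cs hlam1
        linarith
      calc ((((Λ * Φᴴ).trace.re : ℝ)) : EReal) - conjH rankRestr Φ
          ≤ (((Λ * Φᴴ).trace.re : ℝ) : EReal)
            - ((∑ j, if 1 < |hΦ.eigenvalues j| then |hΦ.eigenvalues j| - 1 else 0 : ℝ) : EReal) :=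
            EReal.sub_le_sub le_rfl hgΦ
        _ = (((Λ * Φᴴ).trace.re
            - ∑ j, if 1 < |hΦ.eigenvalues j| then |hΦ.eigenvalues j| - 1 else 0 : ℝ) : EReal) :=
            (EReal.coe_sub _ _).symm
        _ ≤ _ := EReal.coe_le_coe_iff.mpr hreal
    · -- lower bound via the sign matrix
      set sgn : Fin m → ℝ := fun i => if lam i = 0 then 0 else if 0 ≤ lam i then 1 else -1
        with hsgn
      set S : Matrix (Fin m) (Fin m) ℂ := U * Matrix.diagonal (fun i => (sgn i : ℂ)) * Uᴴ
        with hS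
      have hSH : S.IsHermitian := conj_diag_isHermitian U sgn
      have hsgnabs : ∀ i, |sgn i| ≤ 1 := by
        intro i; rw [hsgn]; dsimp only; split_ifs <;> norm_num
      have hSeig : ∀ i, |hSH.eigenvalues i| ≤ 1 :=
        forall_transfer (eig_multiset hSH U hU sgn rfl).symm (fun x => |x| ≤ 1) hsgnabs
      have h0 := conj_rank_le_zero hSH hSeig
      have hSeq : Sᴴ = S := hSH
      have htrS : (Λ * Sᴴ).trace.re = ∑ i, |lam i| := by
        rw [hSeq, hS]
        conv_lhs => rw [hdec]
        rw [trace_conj_diag_same U hU lam sgn, Complex.ofReal_re]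
        apply Finset.sum_congr rfl
        intro i _
        rw [hsgn]; dsimp only
        by_cases h1 : lam i = 0
        · rw [if_pos h1, h1]; simp
        · rw [if_neg h1]
          rcases le_or_gt 0 (lam i) with h2 | h2
          · rw [if_pos h2, mul_one, abs_of_nonneg h2]
          · rw [if_neg (not_le.mpr h2), abs_of_neg h2]; ring
      rw [conjH]
      refine le_trans ?_ (le_iSup₂_of_le S hSH le_rfl)
      calc ((∑ k, singularValues Λ k : ℝ) : EReal)
          = (((Λ * Sᴴ).trace.re : ℝ) : EReal) := by rw [htrS, hsum]
        _ = (((Λ * Sᴴ).trace.re : ℝ) : EReal) - 0 := (sub_zero _).symm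
        _ ≤ (((Λ * Sᴴ).trace.re : ℝ) : EReal) - conjH rankRestr S :=
            EReal.sub_le_sub le_rfl h0
  · rw [if_neg hop]
    apply ereal_eq_top
    intro r
    have hex : ∃ k, 1 < |lam k| := by
      by_contra h
      push_neg at h
      exact hop (opNorm_le_of_abs_eig hΛ h)
    obtain ⟨k, hk⟩ := hex
    have hδpos : (0:ℝ) < |lam k| - 1 := by linarith
    set t := max 1 ((r - 1) / (|lam k| - 1)) with ht
    have ht1 : 1 ≤ t := le_max_left _ _
    have htge : r ≤ t * (|lam k| - 1) + 1 := by
      have h1 : (r - 1) / (|lam k| - 1) ≤ t := le_max_right _ _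
      have h2 : r - 1 ≤ t * (|lam k| - 1) := (div_le_iff₀ hδpos).mp h1
      linarith
    set sg : ℝ := if 0 ≤ lam k then 1 else -1 with hsg
    have hsgabs : |sg| = 1 := by rw [hsg]; split_ifs <;> norm_num
    have hsglam : lam k * sg = |lam k| := by
      rw [hsg]
      split_ifs with h
      · rw [mul_one, abs_of_nonneg h]
      · push_neg at h
        rw [abs_of_neg h]; ring
    have hub := conj_rank_le_t U hU k t sg ht1 hsgabs
    set Φt : Matrix (Fin m) (Fin m) ℂ :=
      U * Matrix.diagonal (fun i => ((if i = k then t * sg else 0 : ℝ) : ℂ)) * Uᴴ with hΦt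
    have hΦtH : Φt.IsHermitian := conj_diag_isHermitian U _
    have hΦteq : Φtᴴ = Φt := hΦtH
    have htrace : (Λ * Φtᴴ).trace.re = t * |lam k| := by
      rw [hΦteq, hΦt]
      conv_lhs => rw [hdec]
      rw [trace_conj_diag_same U hU lam (fun i => if i = k then t * sg else 0),
        Complex.ofReal_re]
      rw [Finset.sum_eq_single k]
      · rw [if_pos rfl, show lam k * (t * sg) = lam k * sg * t from by ring, hsglam, mul_comm]
      · intro j _ hj
        rw [if_neg hj, mul_zero]
      · intro h; exact absurd (Finset.mem_univ k) h
    rw [conjH]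
    refine le_trans ?_ (le_iSup₂_of_le Φt hΦtH le_rfl)
    calc (r : EReal) ≤ ((t * |lam k| - (t - 1) : ℝ) : EReal) := by
          apply EReal.coe_le_coe_iff.mpr
          nlinarith
      _ = ((t * |lam k| : ℝ) : EReal) - ((t - 1 : ℝ) : EReal) := EReal.coe_sub _ _
      _ ≤ ((t * |lam k| : ℝ) : EReal) - conjH rankRestr Φt := EReal.sub_le_sub le_rfl hub
      _ = (((Λ * Φtᴴ).trace.re : ℝ) : EReal) - conjH rankRestr Φt := by rw [htrace]
end

section
/- Let Λ be a continuous ℂ^{m×m}-valued function on the unit circle and define f*(Φ) = ∫ Σ_{k=1}^{r(θ)} (σ_k(Φ(e^{iθ})) − 1) dθ/2π, where r(θ) is the number of singular values of Φ(e^{iθ}) exceeding 1. If sup_θ σ_1(Λ(e^{iθ})) > 1, then sup_Φ ( ⟨Λ,Φ⟩ − f*(Φ) ) = +∞, where the supremum is over continuous matrix-valued Φ and ⟨Λ,Φ⟩ = ∫ Re tr(Λ(e^{iθ}) Φ(e^{iθ})*) dθ/2π. -/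
open Matrix Finset
open scoped ComplexOrder

/-- `f*(Φ) = (1/2π) ∫ Σ_{k=1}^{r(θ)} (σ_k(Φ(e^{iθ})) − 1) dθ`, where `r(θ)`
counts the singular values exceeding 1; equivalently the sum of positive parts. -/
noncomputable def fstar {m : ℕ} (Φ : ℝ → Matrix (Fin m) (Fin m) ℂ) : ℝ :=
  (2 * Real.pi)⁻¹ * ∫ θ in (-Real.pi)..Real.pi,
    ∑ k : Fin m, max (sdesc (Φ θ) k - 1) 0

/-!
Pick θ₀ with σ₁(Λ(θ₀)) = s > 1 and unit singular vectors u, v with u*Λ(θ₀)v = s, and test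
against the rank-one functions Φ = g·uv* with continuous g ≥ 0. The only nonzero singular value
of Φ(θ) is g(θ), so f*(Φ) = (2π)⁻¹∫(g − 1)⁺, while ⟨Λ, Φ⟩ = (2π)⁻¹∫ g ρ for the continuous
function ρ(θ) = Re u*Λ(θ)v, which satisfies ρ(θ₀) = s > 1. Since (g − 1)⁺ ≤ g, the objective is
at least (2π)⁻¹∫ g (ρ − 1), and g = c (ρ − 1)⁺ turns this into c times the positive number
(2π)⁻¹∫((ρ − 1)⁺)², which is unbounded as c → ∞.
-/

namespace Matrix.IsHermitian

variable {𝕜 n : Type*} [RCLike 𝕜] [Fintype n] [DecidableEq n] {H : Matrix n n 𝕜}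

theorem eigenvalues_eq_zero_or_eq_of_mul_self_eq_smul (hH : H.IsHermitian) {t : ℝ}
    (hHH : H * H = (t : 𝕜) • H) (i : n) : hH.eigenvalues i = 0 ∨ hH.eigenvalues i = t := by
  have hv : ⇑(hH.eigenvectorBasis i) ≠ 0 := fun h =>
    hH.eigenvectorBasis.orthonormal.ne_zero i (by ext k; exact congrFun h k)
  have hHv := hH.mulVec_eigenvectorBasis i
  have key : (hH.eigenvalues i * (hH.eigenvalues i - t)) • ⇑(hH.eigenvectorBasis i) = 0 := by
    have h1 := congrArg (· *ᵥ ⇑(hH.eigenvectorBasis i)) hHH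
    simp only [← mulVec_mulVec, smul_mulVec, hHv, mulVec_smul, ← RCLike.real_smul_eq_coe_smul,
      smul_smul] at h1
    rw [mul_sub, sub_smul, h1, mul_comm t, sub_self]
  rcases smul_eq_zero.mp key with h | h
  · rcases mul_eq_zero.mp h with h | h
    · exact Or.inl h
    · exact Or.inr (sub_eq_zero.mp h)
  · exact absurd h hv

theorem sum_apply_eigenvalues_eq_of_mul_self_eq_smul (hH : H.IsHermitian) {t : ℝ}
    (hHH : H * H = (t : 𝕜) • H) (htr : H.trace = t) {F : ℝ → ℝ} (hF : F 0 = 0) :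
    ∑ i, F (hH.eigenvalues i) = F t := by
  have hsum : ∑ i, hH.eigenvalues i = t := by
    have := hH.trace_eq_sum_eigenvalues
    rw [htr, ← RCLike.ofReal_sum] at this
    exact_mod_cast this.symm
  have hF' : ∀ s, s = 0 ∨ s = t → F s = s / t * F t := by
    rintro s (rfl | rfl)
    · simp [hF]
    · rcases eq_or_ne s 0 with rfl | hs
      · simp [hF]
      · rw [div_self hs, one_mul]
  calc ∑ i, F (hH.eigenvalues i)
      = ∑ i, hH.eigenvalues i / t * F t :=
        Finset.sum_congr rfl fun i _ =>
          hF' _ (hH.eigenvalues_eq_zero_or_eq_of_mul_self_eq_smul hHH i)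
    _ = t / t * F t := by rw [← Finset.sum_mul, ← Finset.sum_div, hsum]
    _ = F t := by
      rcases eq_or_ne t 0 with rfl | ht
      · simp [hF]
      · rw [div_self ht, one_mul]

end Matrix.IsHermitian

theorem Matrix.trace_mul_conjTranspose_vecMulVec {α n : Type*} [CommSemiring α] [StarRing α]
    [Fintype n] (A : Matrix n n α) (u v : n → α) :
    (A * (vecMulVec u (star v))ᴴ).trace = star u ⬝ᵥ (A *ᵥ v) := by
  rw [conjTranspose_vecMulVec, star_star, mul_vecMulVec, trace_vecMulVec, dotProduct_comm]

theorem Matrix.re_trace_mul_conjTranspose_ofReal_smul {n : Type*} [Fintype n]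
    (A C : Matrix n n ℂ) (r : ℝ) : (A * ((r : ℂ) • C)ᴴ).trace.re = r * (A * Cᴴ).trace.re := by
  rw [conjTranspose_smul, Complex.star_def, Complex.conj_ofReal, mul_smul_comm, trace_smul,
    smul_eq_mul, Complex.re_ofReal_mul]

theorem sum_sdesc_eq_sum_singularValues {m : ℕ} (A : Matrix (Fin m) (Fin m) ℂ) (F : ℝ → ℝ) :
    ∑ k, F (sdesc A k) = ∑ k, F (singularValues A k) :=
  Equiv.sum_comp (Fin.revPerm.trans (Tuple.sort (singularValues A))) (F ∘ singularValues A)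

theorem sum_singularValues_smul_vecMulVec {m : ℕ} {u v : Fin m → ℂ} (hu : star u ⬝ᵥ u = 1)
    (hv : star v ⬝ᵥ v = 1) {c : ℝ} (hc : 0 ≤ c) {F : ℝ → ℝ} (hF : F 0 = 0) :
    ∑ k, F (singularValues ((c : ℂ) • vecMulVec u (star v)) k) = F c := by
  set Φ := (c : ℂ) • vecMulVec u (star v)
  have hΦΦ : Φᴴ * Φ = ((c ^ 2 : ℝ) : ℂ) • vecMulVec v (star v) := by
    rw [conjTranspose_smul, conjTranspose_vecMulVec, star_star, Complex.star_def,
      Complex.conj_ofReal, smul_mul_smul_comm, vecMulVec_mul_vecMulVec, hu, one_smul]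
    rw [← Complex.ofReal_mul, ← sq]
  have hsq : (Φᴴ * Φ) * (Φᴴ * Φ) = ((c ^ 2 : ℝ) : ℂ) • (Φᴴ * Φ) := by
    rw [hΦΦ, smul_mul_smul_comm, vecMulVec_mul_vecMulVec, hv, one_smul, smul_smul]
  have htr : (Φᴴ * Φ).trace = ((c ^ 2 : ℝ) : ℂ) := by
    rw [hΦΦ, trace_smul, trace_vecMulVec, dotProduct_comm, hv, smul_eq_mul, mul_one]
  calc ∑ k, F (singularValues Φ k)
      = ∑ k, (F ∘ Real.sqrt) ((posSemidef_conjTranspose_mul_self Φ).1.eigenvalues k) := rfl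
    _ = F (Real.sqrt (c ^ 2)) :=
      IsHermitian.sum_apply_eigenvalues_eq_of_mul_self_eq_smul _ hsq htr (by simp [hF])
    _ = F c := by rw [Real.sqrt_sq hc]

theorem exists_dotProduct_mulVec_eq_singularValues {m : ℕ} (A : Matrix (Fin m) (Fin m) ℂ)
    (j : Fin m) (hj : 0 < singularValues A j) :
    ∃ u v : Fin m → ℂ, star u ⬝ᵥ u = 1 ∧ star v ⬝ᵥ v = 1 ∧
      star u ⬝ᵥ (A *ᵥ v) = singularValues A j := by
  set hA := posSemidef_conjTranspose_mul_self A
  set s := singularValues A j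
  set v := ⇑(hA.1.eigenvectorBasis j)
  have hs : s ^ 2 = hA.1.eigenvalues j := Real.sq_sqrt (hA.eigenvalues_nonneg j)
  have hv : star v ⬝ᵥ v = 1 := by
    rw [dotProduct_comm, ← EuclideanSpace.inner_eq_star_dotProduct, inner_self_eq_norm_sq_to_K,
      hA.1.eigenvectorBasis.orthonormal.1 j]
    norm_num
  have hAv : star (A *ᵥ v) ⬝ᵥ (A *ᵥ v) = ((s ^ 2 : ℝ) : ℂ) := by
    rw [star_mulVec, dotProduct_mulVec, vecMul_vecMul, ← dotProduct_mulVec,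
      hA.1.mulVec_eigenvectorBasis j, hs, dotProduct_smul, hv, Complex.real_smul, mul_one]
  refine ⟨((s⁻¹ : ℝ) : ℂ) • (A *ᵥ v), v, ?_, hv, ?_⟩
  · rw [star_smul, smul_dotProduct, dotProduct_smul, hAv, smul_eq_mul, smul_eq_mul,
      Complex.star_def, Complex.conj_ofReal]
    exact_mod_cast (by field_simp : s⁻¹ * (s⁻¹ * s ^ 2) = 1)
  · rw [star_smul, smul_dotProduct, hAv, smul_eq_mul, Complex.star_def, Complex.conj_ofReal]
    exact_mod_cast (by field_simp : s⁻¹ * s ^ 2 = s)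

theorem fstar_smul_vecMulVec {m : ℕ} {u v : Fin m → ℂ} (hu : star u ⬝ᵥ u = 1)
    (hv : star v ⬝ᵥ v = 1) {g : ℝ → ℝ} (hg : ∀ θ, 0 ≤ g θ) :
    fstar (fun θ => (g θ : ℂ) • vecMulVec u (star v)) =
      (2 * Real.pi)⁻¹ * ∫ θ in (-Real.pi)..Real.pi, max (g θ - 1) 0 := by
  rw [fstar]
  congr 2
  funext θ
  exact (sum_sdesc_eq_sum_singularValues _ fun x => max (x - 1) 0).trans
    (sum_singularValues_smul_vecMulVec hu hv (hg θ) (F := fun x => max (x - 1) 0) (by simp))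

theorem exists_continuous_nonneg_lt_integral_mul_sub_integral {ρ : ℝ → ℝ} (hρ : Continuous ρ)
    {a b θ₀ : ℝ} (hab : a < b) (hθ₀ : θ₀ ∈ Set.Icc a b) (hρθ₀ : 1 < ρ θ₀) (M : ℝ) :
    ∃ g : ℝ → ℝ, Continuous g ∧ (∀ θ, 0 ≤ g θ) ∧
      M < (∫ θ in a..b, g θ * ρ θ) - ∫ θ in a..b, max (g θ - 1) 0 := by
  set h := fun θ => max (ρ θ - 1) 0
  have hh : Continuous h := (hρ.sub continuous_const).max continuous_const
  have hI : 0 < ∫ θ in a..b, h θ * (ρ θ - 1) := by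
    refine intervalIntegral.integral_pos hab (hh.mul (hρ.sub continuous_const)).continuousOn
      (fun θ _ => ?_) ⟨θ₀, hθ₀, ?_⟩
    · rcases le_total (ρ θ - 1) 0 with hθ | hθ <;> simp [h, hθ, mul_self_nonneg]
    · simp only [h, max_eq_left (sub_pos.mpr hρθ₀).le]
      exact mul_self_pos.mpr (sub_pos.mpr hρθ₀).ne'
  set c := |M| / (∫ θ in a..b, h θ * (ρ θ - 1)) + 1
  have hc : 0 ≤ c := by positivity
  refine ⟨fun θ => c * h θ, continuous_const.mul hh, fun θ => by positivity, ?_⟩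
  have hpointwise : ∀ θ, c * h θ * (ρ θ - 1) ≤ c * h θ * ρ θ - max (c * h θ - 1) 0 := by
    intro θ
    have : max (c * h θ - 1) 0 ≤ c * h θ := max_le (by linarith) (by positivity)
    linarith
  calc M < c * ∫ θ in a..b, h θ * (ρ θ - 1) := by
        rw [add_mul, div_mul_cancel₀ _ hI.ne', one_mul]
        linarith [le_abs_self M]
    _ = ∫ θ in a..b, c * h θ * (ρ θ - 1) := by
        rw [← intervalIntegral.integral_const_mul]
        simp only [mul_assoc]
    _ ≤ ∫ θ in a..b, (c * h θ * ρ θ - max (c * h θ - 1) 0) := by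
        refine intervalIntegral.integral_mono_on hab.le ?_ ?_ fun θ _ => hpointwise θ
        all_goals (apply Continuous.intervalIntegrable; fun_prop)
    _ = _ := by
        refine intervalIntegral.integral_sub ?_ ?_
        all_goals (apply Continuous.intervalIntegrable; fun_prop)

theorem EReal.iSup₂_coe_eq_top {ι : Sort*} {κ : ι → Sort*} {f : (i : ι) → κ i → ℝ}
    (hf : ∀ M : ℝ, ∃ i j, M < f i j) : ⨆ i, ⨆ j, (f i j : EReal) = ⊤ := by
  refine iSup₂_eq_top _ |>.mpr fun b hb => ?_
  obtain ⟨M, hbM, -⟩ := EReal.exists_between_coe_real hb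
  obtain ⟨i, j, hM⟩ := hf M
  exact ⟨i, j, hbM.trans (EReal.coe_lt_coe_iff.mpr hM)⟩

theorem stmt_15_general (m : ℕ) (hm : 0 < m) (Λ : ℝ → Matrix (Fin m) (Fin m) ℂ)
    (hcont : ∀ p q : Fin m, Continuous fun θ => Λ θ p q)
    (hsup : 1 < ⨆ θ : Set.Icc (-Real.pi) Real.pi, sdesc (Λ (θ : ℝ)) ⟨0, hm⟩) :
    (⨆ (Φ : ℝ → Matrix (Fin m) (Fin m) ℂ)
        (_ : ∀ p q : Fin m, Continuous fun θ => Φ θ p q),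
        ((((2 * Real.pi)⁻¹
            * ∫ θ in (-Real.pi)..Real.pi, (Λ θ * (Φ θ)ᴴ).trace.re : ℝ)) : EReal)
          - ((fstar Φ : ℝ) : EReal)) = ⊤ := by
  have hπ := Real.pi_pos
  have : Nonempty (Set.Icc (-Real.pi) Real.pi) := ⟨⟨0, by constructor <;> linarith⟩⟩
  obtain ⟨⟨θ₀, hθ₀⟩, hs⟩ := exists_lt_of_lt_ciSup hsup
  obtain ⟨u, v, hu, hv, huv⟩ := exists_dotProduct_mulVec_eq_singularValues (Λ θ₀) _
    (one_pos.trans hs)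
  set ρ := fun θ => (Λ θ * (vecMulVec u (star v))ᴴ).trace.re
  have hΛ : Continuous Λ := continuous_pi fun p => continuous_pi fun q => hcont p q
  have hρ : Continuous ρ :=
    Complex.continuous_re.comp (hΛ.matrix_mul continuous_const).matrix_trace
  have hρθ₀ : ρ θ₀ = sdesc (Λ θ₀) ⟨0, hm⟩ := by
    simp only [ρ, trace_mul_conjTranspose_vecMulVec, huv, Complex.ofReal_re]
    rfl
  simp_rw [← EReal.coe_sub]
  refine EReal.iSup₂_coe_eq_top fun M => ?_
  obtain ⟨g, hg, hg0, hM⟩ := exists_continuous_nonneg_lt_integral_mul_sub_integral hρ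
    (by linarith : -Real.pi < Real.pi) hθ₀ (hρθ₀ ▸ hs) (2 * Real.pi * M)
  refine ⟨fun θ => (g θ : ℂ) • vecMulVec u (star v), fun p q => ?_, ?_⟩
  · exact (Complex.continuous_ofReal.comp hg).mul continuous_const
  simp only [re_trace_mul_conjTranspose_ofReal_smul, fstar_smul_vecMulVec hu hv hg0, ← mul_sub]
  exact (lt_inv_mul_iff₀ (by positivity)).mpr hM

/-- if `sup_θ σ_1(Λ(e^{iθ})) > 1` for a continuous 2π-periodic
matrix function `Λ`, then `sup_Φ (⟨Λ,Φ⟩ − f*(Φ)) = +∞` over continuous `Φ`. -/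
theorem stmt_15 (m : ℕ) (hm : 0 < m) (Λ : ℝ → Matrix (Fin m) (Fin m) ℂ)
    (hcont : ∀ p q : Fin m, Continuous fun θ => Λ θ p q)
    (hper : ∀ θ : ℝ, Λ (θ + 2 * Real.pi) = Λ θ)
    (hsup : 1 < ⨆ θ : Set.Icc (-Real.pi) Real.pi, sdesc (Λ (θ : ℝ)) ⟨0, hm⟩) :
    (⨆ (Φ : ℝ → Matrix (Fin m) (Fin m) ℂ)
        (_ : ∀ p q : Fin m, Continuous fun θ => Φ θ p q),
        ((((2 * Real.pi)⁻¹
            * ∫ θ in (-Real.pi)..Real.pi, (Λ θ * (Φ θ)ᴴ).trace.re : ℝ)) : EReal)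
          - ((fstar Φ : ℝ) : EReal)) = ⊤ :=
  stmt_15_general m hm Λ hcont hsup
end
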